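/- arXiv:2601.04708 — 3 statements merged into one kernel-verified Lean document; each statement's English description precedes it below -/
import Mathlib

section
/- (Proposition 1, first bound.) Assume λ_min(G) > 0 and that the constant function 1 belongs to P. Then for every bounded measurable f : Ω → ℝ, the weighted least-squares projection 𝒢f satisfies ‖f − 𝒢f‖_{L²} ≤ (1 + √(λ_max(G)/λ_min(G))) · √(μ(Ω)) · E(f), where λ_max(G)/λ_min(G) = cond₂(G). Moreover, if η := max{|1 − λ_min(G)|, |1 − λ_max(G)|} < 1, then ‖f − 𝒢f‖_{L²} ≤ (1 + √((1+η)/(1−η))) · √(μ(Ω)) · E(f). -/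
open MeasureTheory Matrix BigOperators

/-- The weighted least-squares projection `𝒢f = ∑ⱼ cⱼ φⱼ` with
`c = G⁻¹ (S(f φ₁), …, S(f φ_d))`, for the cubature rule `S(g) = ∑ᵢ wᵢ g(xᵢ)`. -/
noncomputable def leastSquaresProj {Ω : Type*} {M d : ℕ}
    (x : Fin M → Ω) (w : Fin M → ℝ) (φ : Fin d → Ω → ℝ)
    (G : Matrix (Fin d) (Fin d) ℝ) (f : Ω → ℝ) : Ω → ℝ :=
  fun t => ∑ j, (G⁻¹.mulVec fun j' => ∑ i, w i * (f (x i) * φ j' (x i))) j * φ j t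

/-- The error of best uniform approximation of `f` from the span `P` of `φ₁, …, φ_d`:
`E(f) = inf_{p ∈ P} sup_{x ∈ Ω} |f(x) − p(x)|`. -/
noncomputable def bestUniformError {Ω : Type*} {d : ℕ}
    (φ : Fin d → Ω → ℝ) (f : Ω → ℝ) : ℝ :=
  ⨅ c : Fin d → ℝ, ⨆ t : Ω, |f t - ∑ j, c j * φ j t|

lemma bm_integrable {Ω : Type*} [MeasurableSpace Ω] {μ : Measure Ω} [IsFiniteMeasure μ]
    {u : Ω → ℝ} (hm : Measurable u) (hb : ∃ C, ∀ t, |u t| ≤ C) : Integrable u μ := by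
  obtain ⟨C, hC⟩ := hb
  exact (integrable_const C).mono' hm.aestronglyMeasurable
    (ae_of_all _ fun t => by simpa [Real.norm_eq_abs] using hC t)

lemma bm_mul_integrable {Ω : Type*} [MeasurableSpace Ω] {μ : Measure Ω} [IsFiniteMeasure μ]
    {u v : Ω → ℝ} (hu : Measurable u) (hv : Measurable v)
    (hub : ∃ C, ∀ t, |u t| ≤ C) (hvb : ∃ C, ∀ t, |v t| ≤ C) :
    Integrable (fun t => u t * v t) μ := by
  obtain ⟨Cu, hCu⟩ := hub; obtain ⟨Cv, hCv⟩ := hvb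
  refine bm_integrable (hu.mul hv) ⟨max Cu 0 * max Cv 0, fun t => ?_⟩
  rw [abs_mul]
  exact mul_le_mul ((hCu t).trans (le_max_left _ _)) ((hCv t).trans (le_max_left _ _))
    (abs_nonneg _) (le_max_right _ _)

lemma quadForm_bounds {d : ℕ} (G : Matrix (Fin d) (Fin d) ℝ) (hherm : G.IsHermitian)
    {A B : ℝ}
    (hA : IsLeast {t : ℝ | Module.End.HasEigenvalue (Matrix.mulVecLin G) t} A)
    (hB : IsGreatest {t : ℝ | Module.End.HasEigenvalue (Matrix.mulVecLin G) t} B)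
    (v : Fin d → ℝ) :
    A * (∑ i, v i ^ 2) ≤ v ⬝ᵥ G.mulVec v ∧ v ⬝ᵥ G.mulVec v ≤ B * ∑ i, v i ^ 2 := by
  classical
  by_cases hv : v = 0
  · simp [hv]
  set E := EuclideanSpace ℝ (Fin d)
  set T : E →ₗ[ℝ] E := Matrix.toEuclideanLin G with hT
  have hsym : T.IsSymmetric := Matrix.isHermitian_iff_isSymmetric.mp hherm
  have hnt : Nontrivial E := by
    refine nontrivial_of_ne ((WithLp.equiv 2 (Fin d → ℝ)).symm v) 0 ?_
    intro h0; apply hv; simpa using congrArg WithLp.ofLp h0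
  -- bound on Rayleigh quotients
  set C := ‖LinearMap.toContinuousLinearMap T‖ with hC
  have hray_bound : ∀ x : {x : E // x ≠ 0},
      |RCLike.re (inner (𝕜 := ℝ) (T x) (x : E)) / ‖(x : E)‖ ^ 2| ≤ C := by
    rintro ⟨x, hx⟩
    show |RCLike.re (inner (𝕜 := ℝ) (T x) x) / ‖x‖ ^ 2| ≤ C
    have hx' : (0:ℝ) < ‖x‖ := norm_pos_iff.mpr hx
    rw [abs_div, abs_of_nonneg (sq_nonneg ‖x‖ : (0:ℝ) ≤ ‖x‖ ^ 2), div_le_iff₀ (by positivity)]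
    calc |RCLike.re (inner (𝕜 := ℝ) (T x) x)| ≤ ‖T x‖ * ‖x‖ := by
          simpa [Real.norm_eq_abs] using abs_real_inner_le_norm (T x) x
      _ ≤ (C * ‖x‖) * ‖x‖ := by
          gcongr
          simpa using (LinearMap.toContinuousLinearMap T).le_opNorm x
      _ = C * ‖x‖ ^ 2 := by ring
  have hbddAbove : BddAbove (Set.range fun x : {x : E // x ≠ 0} =>
      RCLike.re (inner (𝕜 := ℝ) (T x) (x : E)) / ‖(x : E)‖ ^ 2) := by
    refine ⟨C, ?_⟩; rintro _ ⟨x, rfl⟩; exact (abs_le.mp (hray_bound x)).2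
  have hbddBelow : BddBelow (Set.range fun x : {x : E // x ≠ 0} =>
      RCLike.re (inner (𝕜 := ℝ) (T x) (x : E)) / ‖(x : E)‖ ^ 2) := by
    refine ⟨-C, ?_⟩; rintro _ ⟨x, rfl⟩; exact (abs_le.mp (hray_bound x)).1
  have transfer : ∀ μ', Module.End.HasEigenvalue T μ' →
      Module.End.HasEigenvalue (Matrix.mulVecLin G) μ' := by
    intro μ' h
    obtain ⟨u, hu⟩ := h.exists_hasEigenvector
    refine Module.End.hasEigenvalue_of_hasEigenvector (x := WithLp.ofLp u)
      ⟨Module.End.mem_eigenspace_iff.mpr ?_, ?_⟩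
    · have := congrArg WithLp.ofLp (Module.End.mem_eigenspace_iff.mp hu.1)
      simpa [hT, Matrix.mulVecLin_apply, Matrix.toEuclideanLin_apply] using this
    · intro h0; apply hu.2; simpa using congrArg (WithLp.toLp 2) h0
  have hsupEig : Module.End.HasEigenvalue (Matrix.mulVecLin G)
      (⨆ x : {x : E // x ≠ 0}, RCLike.re (inner (𝕜 := ℝ) (T x) (x : E)) / ‖(x : E)‖ ^ 2) :=
    transfer _ hsym.hasEigenvalue_iSup_of_finiteDimensional
  have hinfEig : Module.End.HasEigenvalue (Matrix.mulVecLin G)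
      (⨅ x : {x : E // x ≠ 0}, RCLike.re (inner (𝕜 := ℝ) (T x) (x : E)) / ‖(x : E)‖ ^ 2) :=
    transfer _ hsym.hasEigenvalue_iInf_of_finiteDimensional
  set xv : E := (WithLp.equiv 2 (Fin d → ℝ)).symm v with hxv
  have hxvne : xv ≠ 0 := by intro h0; apply hv; simpa [hxv] using congrArg WithLp.ofLp h0
  have hinner : RCLike.re (inner (𝕜 := ℝ) (T xv) xv) = v ⬝ᵥ G.mulVec v := by
    simp only [RCLike.re_to_real]
    rw [PiLp.inner_apply]
    rw [dotProduct]
    exact Finset.sum_congr rfl fun i _ => by rw [mul_comm]; simp [hT, hxv, mul_comm]; exact Or.inl rfl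
  have hnorm : ‖xv‖ ^ 2 = ∑ i, v i ^ 2 := by
    rw [← real_inner_self_eq_norm_sq, PiLp.inner_apply]
    simp [hxv, sq]
  have hnpos : (0:ℝ) < ∑ i, v i ^ 2 := by
    rw [← hnorm]; exact pow_pos (norm_pos_iff.mpr hxvne) 2
  have hle1 : A ≤ (v ⬝ᵥ G.mulVec v) / (∑ i, v i ^ 2) := by
    calc A ≤ ⨅ x : {x : E // x ≠ 0}, RCLike.re (inner (𝕜 := ℝ) (T x) (x : E)) / ‖(x : E)‖ ^ 2 :=
          hA.2 hinfEig
      _ ≤ _ := by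
          have := ciInf_le hbddBelow (⟨xv, hxvne⟩ : {x : E // x ≠ 0})
          rwa [hinner, hnorm] at this
  have hle2 : (v ⬝ᵥ G.mulVec v) / (∑ i, v i ^ 2) ≤ B := by
    calc (v ⬝ᵥ G.mulVec v) / (∑ i, v i ^ 2) ≤ ⨆ x : {x : E // x ≠ 0},
          RCLike.re (inner (𝕜 := ℝ) (T x) (x : E)) / ‖(x : E)‖ ^ 2 := by
          have := le_ciSup hbddAbove (⟨xv, hxvne⟩ : {x : E // x ≠ 0})
          rwa [hinner, hnorm] at this
      _ ≤ B := hB.2 hsupEig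
  constructor
  · have := mul_le_mul_of_nonneg_right hle1 hnpos.le
    rwa [div_mul_cancel₀ _ hnpos.ne'] at this
  · have := mul_le_mul_of_nonneg_right hle2 hnpos.le
    rwa [div_mul_cancel₀ _ hnpos.ne'] at this

set_option maxHeartbeats 1000000 in
/-- **Proposition 1, first bound.** If `λ_min(G) > 0` and the constant
function `1` belongs to `P`, then for every bounded measurable `f`,
`‖f − 𝒢f‖_{L²} ≤ (1 + √(λ_max/λ_min)) √(μ(Ω)) E(f)` (note
`λ_max(G)/λ_min(G) = cond₂(G)`); moreover if
`η = max{|1−λ_min|, |1−λ_max|} < 1` then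
`‖f − 𝒢f‖_{L²} ≤ (1 + √((1+η)/(1−η))) √(μ(Ω)) E(f)`. -/
theorem leastSquares_error_bound_cond
    {Ω : Type*} [MeasurableSpace Ω] (μ : Measure Ω)
    (hμ0 : 0 < μ Set.univ) (hμfin : μ Set.univ < ⊤)
    {M d : ℕ}
    (x : Fin M → Ω) (w : Fin M → ℝ) (hw : ∀ i, 0 < w i)
    (φ : Fin d → Ω → ℝ)
    (hmeas : ∀ j, Measurable (φ j))
    (hbdd : ∀ j, ∃ C : ℝ, ∀ t, |φ j t| ≤ C)
    (horth : ∀ j k, ∫ t, φ j t * φ k t ∂μ = if j = k then (1 : ℝ) else 0)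
    (G : Matrix (Fin d) (Fin d) ℝ)
    (hG : ∀ j k, G j k = ∑ i, w i * (φ j (x i) * φ k (x i)))
    (A B : ℝ)
    (hA : IsLeast {t : ℝ | Module.End.HasEigenvalue (Matrix.mulVecLin G) t} A)
    (hB : IsGreatest {t : ℝ | Module.End.HasEigenvalue (Matrix.mulVecLin G) t} B)
    (hApos : 0 < A)
    (hone : ∃ c : Fin d → ℝ, ∀ t : Ω, (1 : ℝ) = ∑ j, c j * φ j t)
    (f : Ω → ℝ) (hf : Measurable f) (hfb : ∃ C : ℝ, ∀ t, |f t| ≤ C) :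
    Real.sqrt (∫ t, (f t - leastSquaresProj x w φ G f t) ^ 2 ∂μ)
        ≤ (1 + Real.sqrt (B / A)) * Real.sqrt (μ Set.univ).toReal
            * bestUniformError φ f
      ∧ (max |1 - A| |1 - B| < 1 →
          Real.sqrt (∫ t, (f t - leastSquaresProj x w φ G f t) ^ 2 ∂μ)
            ≤ (1 + Real.sqrt ((1 + max |1 - A| |1 - B|) / (1 - max |1 - A| |1 - B|)))
                * Real.sqrt (μ Set.univ).toReal * bestUniformError φ f) := by
  classical
  haveI : IsFiniteMeasure μ := ⟨hμfin⟩
  have hΩ : Nonempty Ω := by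
    by_contra hn
    rw [not_nonempty_iff] at hn
    have : μ Set.univ = 0 := by rw [Set.univ_eq_empty_iff.mpr hn, measure_empty]
    exact absurd this hμ0.ne'
  obtain ⟨t₀⟩ := hΩ
  set m := (μ Set.univ).toReal with hm
  have hm0 : 0 < m := ENNReal.toReal_pos hμ0.ne' hμfin.ne
  choose Cφ hCφ using hbdd
  obtain ⟨c₀, hc₀⟩ := hone
  have hherm : G.IsHermitian := by
    ext j k
    simp only [conjTranspose_apply, star_trivial]
    rw [hG, hG]; exact Finset.sum_congr rfl fun i _ => by ring
  have hdet : IsUnit G.det := by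
    rw [isUnit_iff_ne_zero]
    intro hdet
    obtain ⟨v, hv0, hv⟩ := (Matrix.exists_mulVec_eq_zero_iff).mpr hdet
    have : Module.End.HasEigenvalue (Matrix.mulVecLin G) 0 :=
      Module.End.hasEigenvalue_of_hasEigenvector
        ⟨Module.End.mem_eigenspace_iff.mpr (by simp [Matrix.mulVecLin_apply, hv]), hv0⟩
    exact absurd (hA.2 this) (not_le.mpr hApos)
  have hBpos : 0 < B := lt_of_lt_of_le hApos (hB.2 hA.1)
  have hspan_meas : ∀ a : Fin d → ℝ, Measurable fun t => ∑ j, a j * φ j t :=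
    fun a => Finset.measurable_sum _ fun j _ => (hmeas j).const_mul (a j)
  have hspan_bdd : ∀ a : Fin d → ℝ, ∃ C, ∀ t, |∑ j, a j * φ j t| ≤ C := by
    intro a
    refine ⟨∑ j, |a j| * max (Cφ j) 0, fun t => ?_⟩
    calc |∑ j, a j * φ j t| ≤ ∑ j, |a j * φ j t| := Finset.abs_sum_le_sum_abs _ _
      _ ≤ ∑ j, |a j| * max (Cφ j) 0 := Finset.sum_le_sum fun j _ => by
          rw [abs_mul]
          exact mul_le_mul_of_nonneg_left ((hCφ j t).trans (le_max_left _ _)) (abs_nonneg _)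
  have hφφint : ∀ j k, Integrable (fun t => φ j t * φ k t) μ := fun j k =>
    bm_mul_integrable (hmeas j) (hmeas k) ⟨Cφ j, hCφ j⟩ ⟨Cφ k, hCφ k⟩
  have spanInt : ∀ a b : Fin d → ℝ,
      ∫ t, (∑ j, a j * φ j t) * (∑ k, b k * φ k t) ∂μ = ∑ j, a j * b j := by
    intro a b
    have h1 : ∀ t, (∑ j, a j * φ j t) * (∑ k, b k * φ k t)
        = ∑ j, ∑ k, (a j * b k) * (φ j t * φ k t) := by
      intro t
      rw [Finset.sum_mul_sum]
      exact Finset.sum_congr rfl fun j _ => Finset.sum_congr rfl fun k _ => by ring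
    simp_rw [h1]
    rw [integral_finset_sum _ fun j _ =>
      integrable_finset_sum _ fun k _ => ((hφφint j k).const_mul _)]
    have h2 : ∀ j : Fin d, ∫ t, ∑ k, (a j * b k) * (φ j t * φ k t) ∂μ
        = ∑ k, (a j * b k) * if j = k then (1:ℝ) else 0 := by
      intro j
      rw [integral_finset_sum _ fun k _ => ((hφφint j k).const_mul _)]
      exact Finset.sum_congr rfl fun k _ => by rw [integral_const_mul, horth]
    simp_rw [h2]
    simp [mul_ite, Finset.sum_ite_eq]
  have spanS : ∀ a b : Fin d → ℝ,
      ∑ i, w i * ((∑ j, a j * φ j (x i)) * (∑ k, b k * φ k (x i))) = a ⬝ᵥ G.mulVec b := by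
    intro a b
    have h1 : ∀ i, w i * ((∑ j, a j * φ j (x i)) * (∑ k, b k * φ k (x i)))
        = ∑ j, ∑ k, a j * b k * (w i * (φ j (x i) * φ k (x i))) := by
      intro i
      rw [Finset.sum_mul_sum, Finset.mul_sum]
      refine Finset.sum_congr rfl fun j _ => ?_
      rw [Finset.mul_sum]
      exact Finset.sum_congr rfl fun k _ => by ring
    calc ∑ i, w i * ((∑ j, a j * φ j (x i)) * (∑ k, b k * φ k (x i)))
        = ∑ i, ∑ j, ∑ k, a j * b k * (w i * (φ j (x i) * φ k (x i))) :=
          Finset.sum_congr rfl fun i _ => h1 i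
      _ = ∑ j, ∑ i, ∑ k, a j * b k * (w i * (φ j (x i) * φ k (x i))) := Finset.sum_comm
      _ = ∑ j, ∑ k, ∑ i, a j * b k * (w i * (φ j (x i) * φ k (x i))) :=
          Finset.sum_congr rfl fun j _ => Finset.sum_comm
      _ = a ⬝ᵥ G.mulVec b := by
          simp only [dotProduct, Matrix.mulVec, Finset.mul_sum]
          refine Finset.sum_congr rfl fun j _ => Finset.sum_congr rfl fun k _ => ?_
          rw [hG, Finset.sum_mul, Finset.mul_sum]
          exact Finset.sum_congr rfl fun i _ => by ring
  -- the key estimate, for an arbitrary competitor `c`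
  have key : ∀ c : Fin d → ℝ,
      Real.sqrt (∫ t, (f t - leastSquaresProj x w φ G f t) ^ 2 ∂μ)
        ≤ ((1 + Real.sqrt (B / A)) * Real.sqrt m) * ⨆ t, |f t - ∑ j, c j * φ j t| := by
    intro c
    set s := ⨆ t : Ω, |f t - ∑ j, c j * φ j t| with hs
    set g : Ω → ℝ := fun t => f t - ∑ j, c j * φ j t with hg
    have hgmeas : Measurable g := hf.sub (hspan_meas c)
    have hgbdd : ∃ C, ∀ t, |g t| ≤ C := by
      obtain ⟨Cf, hCf⟩ := hfb; obtain ⟨Cp, hCp⟩ := hspan_bdd c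
      exact ⟨Cf + Cp, fun t => (abs_sub _ _).trans (add_le_add (hCf t) (hCp t))⟩
    have hgs : ∀ t, |g t| ≤ s := by
      obtain ⟨C, hC⟩ := hgbdd
      intro t
      exact le_ciSup (⟨C, by rintro _ ⟨u, rfl⟩; exact hC u⟩ :
        BddAbove (Set.range fun t => |f t - ∑ j, c j * φ j t|)) t
    have hs0 : 0 ≤ s := (abs_nonneg (g t₀)).trans (hgs t₀)
    set Sg : Fin d → ℝ := fun j => ∑ i, w i * (g (x i) * φ j (x i)) with hSgdef
    set e : Fin d → ℝ := G⁻¹.mulVec Sg with he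
    set h : Ω → ℝ := fun t => ∑ j, e j * φ j t with hh
    have hGe : G.mulVec e = Sg := by
      rw [he, Matrix.mulVec_mulVec, Matrix.mul_nonsing_inv _ hdet, Matrix.one_mulVec]
    have hswap : ∀ j, G.mulVec c j = ∑ i, w i * ((∑ k, c k * φ k (x i)) * φ j (x i)) := by
      intro j
      simp only [Matrix.mulVec, dotProduct]
      calc ∑ k, G j k * c k
          = ∑ k, ∑ i, w i * (φ j (x i) * φ k (x i)) * c k := by
            refine Finset.sum_congr rfl fun k _ => ?_
            rw [hG, Finset.sum_mul]
        _ = ∑ i, ∑ k, w i * (φ j (x i) * φ k (x i)) * c k := Finset.sum_comm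
        _ = ∑ i, w i * ((∑ k, c k * φ k (x i)) * φ j (x i)) := by
            refine Finset.sum_congr rfl fun i _ => ?_
            rw [Finset.sum_mul, Finset.mul_sum]
            exact Finset.sum_congr rfl fun k _ => by ring
    have hcoef : (G⁻¹.mulVec fun j' => ∑ i, w i * (f (x i) * φ j' (x i))) = c + e := by
      have hSf : (fun j' => ∑ i, w i * (f (x i) * φ j' (x i))) = G.mulVec c + Sg := by
        funext j
        rw [Pi.add_apply, hswap j, hSgdef]
        rw [← Finset.sum_add_distrib]
        refine Finset.sum_congr rfl fun i _ => ?_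
        simp only [hg]
        ring
      rw [hSf, Matrix.mulVec_add, Matrix.mulVec_mulVec, Matrix.nonsing_inv_mul _ hdet,
        Matrix.one_mulVec, ← he]
    have hpt : ∀ t, f t - leastSquaresProj x w φ G f t = g t - h t := by
      intro t
      simp only [leastSquaresProj, hcoef, Pi.add_apply, add_mul, Finset.sum_add_distrib]
      simp only [hg, hh]
      ring
    have hint_eq : ∫ t, (f t - leastSquaresProj x w φ G f t) ^ 2 ∂μ
        = ∫ t, (g t - h t) ^ 2 ∂μ :=
      integral_congr_ae (ae_of_all _ fun t => by dsimp only; rw [hpt t])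
    -- discrete estimates
    have hgφint : ∀ j, Integrable (fun t => g t * φ j t) μ := fun j =>
      bm_mul_integrable hgmeas (hmeas j) hgbdd ⟨Cφ j, hCφ j⟩
    have hSq : ∑ i, w i * h (x i) ^ 2 = e ⬝ᵥ G.mulVec e := by
      rw [← spanS e e]
      refine Finset.sum_congr rfl fun i _ => ?_
      simp only [hh]; ring
    have hSgh : ∑ i, w i * (g (x i) * h (x i)) = e ⬝ᵥ Sg := by
      calc ∑ i, w i * (g (x i) * h (x i))
          = ∑ i, ∑ j, e j * (w i * (g (x i) * φ j (x i))) := by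
            refine Finset.sum_congr rfl fun i _ => ?_
            simp only [hh, Finset.mul_sum]
            exact Finset.sum_congr rfl fun j _ => by ring
        _ = ∑ j, ∑ i, e j * (w i * (g (x i) * φ j (x i))) := Finset.sum_comm
        _ = e ⬝ᵥ Sg := by
            rw [dotProduct]
            exact Finset.sum_congr rfl fun j _ => by rw [← Finset.mul_sum]
    have hSpos : e ⬝ᵥ Sg ≤ ∑ i, w i * g (x i) ^ 2 := by
      have h0 : 0 ≤ ∑ i, w i * (g (x i) - h (x i)) ^ 2 :=
        Finset.sum_nonneg fun i _ => mul_nonneg (hw i).le (sq_nonneg _)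
      have hexp : ∑ i, w i * (g (x i) - h (x i)) ^ 2
          = ∑ i, w i * g (x i) ^ 2 - 2 * (∑ i, w i * (g (x i) * h (x i)))
            + ∑ i, w i * h (x i) ^ 2 := by
        rw [Finset.mul_sum, ← Finset.sum_sub_distrib, ← Finset.sum_add_distrib]
        exact Finset.sum_congr rfl fun i _ => by ring
      rw [hSgh, hSq, hGe] at hexp
      linarith
    obtain ⟨hq1, _⟩ := quadForm_bounds G hherm hA hB e
    obtain ⟨_, hq2c⟩ := quadForm_bounds G hherm hA hB c₀
    have hSone : ∑ i, (w i : ℝ) = c₀ ⬝ᵥ G.mulVec c₀ := by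
      rw [← spanS c₀ c₀]
      refine Finset.sum_congr rfl fun i _ => ?_
      rw [← hc₀ (x i)]; ring
    have hc₀sq : ∑ j, c₀ j ^ 2 = m := by
      have h1 := spanInt c₀ c₀
      have h2 : ∫ t, (∑ j, c₀ j * φ j t) * (∑ k, c₀ k * φ k t) ∂μ = ∫ t, (1:ℝ) ∂μ :=
        integral_congr_ae (ae_of_all _ fun t => by dsimp only; rw [← hc₀ t]; ring)
      rw [h2, integral_const, smul_eq_mul, mul_one] at h1
      rw [hm, ← measureReal_def, h1]
      exact Finset.sum_congr rfl fun j _ => (pow_two _)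
    have hSg2_le : ∑ i, w i * g (x i) ^ 2 ≤ s ^ 2 * (B * m) := by
      calc ∑ i, w i * g (x i) ^ 2 ≤ ∑ i, w i * s ^ 2 := Finset.sum_le_sum fun i _ => by
            refine mul_le_mul_of_nonneg_left ?_ (hw i).le
            rw [← sq_abs]
            exact pow_le_pow_left₀ (abs_nonneg _) (hgs (x i)) 2
        _ = s ^ 2 * ∑ i, w i := by rw [← Finset.sum_mul]; ring
        _ = s ^ 2 * (c₀ ⬝ᵥ G.mulVec c₀) := by rw [hSone]
        _ ≤ s ^ 2 * (B * ∑ j, c₀ j ^ 2) := mul_le_mul_of_nonneg_left hq2c (sq_nonneg s)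
        _ = s ^ 2 * (B * m) := by rw [hc₀sq]
    have hNle : ∑ j, e j ^ 2 ≤ (B / A) * m * s ^ 2 := by
      have h1 : A * ∑ j, e j ^ 2 ≤ s ^ 2 * (B * m) := by
        calc A * ∑ j, e j ^ 2 ≤ e ⬝ᵥ G.mulVec e := hq1
          _ = e ⬝ᵥ Sg := by rw [hGe]
          _ ≤ ∑ i, w i * g (x i) ^ 2 := hSpos
          _ ≤ s ^ 2 * (B * m) := hSg2_le
      have h2 : ∑ j, e j ^ 2 ≤ s ^ 2 * (B * m) / A := (le_div_iff₀' hApos).mpr h1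
      calc ∑ j, e j ^ 2 ≤ s ^ 2 * (B * m) / A := h2
        _ = (B / A) * m * s ^ 2 := by ring
    -- continuous estimates
    have hg2int : Integrable (fun t => g t ^ 2) μ := by
      have := bm_mul_integrable (μ := μ) hgmeas hgmeas hgbdd hgbdd
      simpa [pow_two] using this
    have hIg2nonneg : 0 ≤ ∫ t, g t ^ 2 ∂μ := integral_nonneg fun t => sq_nonneg _
    have hIg2le : ∫ t, g t ^ 2 ∂μ ≤ m * s ^ 2 := by
      calc ∫ t, g t ^ 2 ∂μ ≤ ∫ _t, s ^ 2 ∂μ := by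
            refine integral_mono hg2int (integrable_const _) fun t => ?_
            rw [← sq_abs]
            exact pow_le_pow_left₀ (abs_nonneg _) (hgs t) 2
        _ = m * s ^ 2 := by rw [integral_const, smul_eq_mul, hm, measureReal_def]
    set b : Fin d → ℝ := fun j => ∫ t, g t * φ j t ∂μ with hb
    have expand : ∀ a : Fin d → ℝ, ∫ t, (g t - ∑ j, a j * φ j t) ^ 2 ∂μ
        = ∫ t, g t ^ 2 ∂μ - 2 * ∑ j, a j * b j + ∑ j, a j * a j := by
      intro a
      have hptw : ∀ t, (g t - ∑ j, a j * φ j t) ^ 2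
          = g t ^ 2 - 2 * (∑ j, a j * (g t * φ j t))
            + (∑ j, a j * φ j t) * (∑ k, a k * φ k t) := by
        intro t
        have hsum : ∑ j, a j * (g t * φ j t) = g t * ∑ j, a j * φ j t := by
          rw [Finset.mul_sum]
          exact Finset.sum_congr rfl fun j _ => by ring
        rw [hsum]; ring
      have int2 : Integrable (fun t => 2 * ∑ j, a j * (g t * φ j t)) μ :=
        (integrable_finset_sum _ fun j _ => (hgφint j).const_mul (a j)).const_mul 2
      have int3 : Integrable (fun t => (∑ j, a j * φ j t) * (∑ k, a k * φ k t)) μ :=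
        bm_mul_integrable (hspan_meas a) (hspan_meas a) (hspan_bdd a) (hspan_bdd a)
      simp_rw [hptw]
      have int12 : Integrable (fun t => g t ^ 2 - 2 * ∑ j, a j * (g t * φ j t)) μ :=
        hg2int.sub int2
      rw [integral_add int12 int3, integral_sub hg2int int2, integral_const_mul,
        integral_finset_sum _ (fun j _ => (hgφint j).const_mul (a j)), spanInt a a]
      simp only [integral_const_mul, hb]
    have hBessel : ∑ j, b j * b j ≤ ∫ t, g t ^ 2 ∂μ := by
      have h0 : 0 ≤ ∫ t, (g t - ∑ j, b j * φ j t) ^ 2 ∂μ := integral_nonneg fun t => sq_nonneg _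
      have h1 := expand b
      linarith
    have hIgh : ∫ t, (g t - h t) ^ 2 ∂μ
        = ∫ t, g t ^ 2 ∂μ - 2 * ∑ j, e j * b j + ∑ j, e j * e j := by
      have h2 : ∫ t, (g t - h t) ^ 2 ∂μ = ∫ t, (g t - ∑ j, e j * φ j t) ^ 2 ∂μ :=
        integral_congr_ae (ae_of_all _ fun t => by simp only [hh])
      rw [h2]
      exact expand e
    have hNnn : (0:ℝ) ≤ ∑ j, e j ^ 2 := Finset.sum_nonneg fun j _ => sq_nonneg _
    have hCS : (∑ j, e j * b j) ^ 2 ≤ (∑ j, e j ^ 2) * ∫ t, g t ^ 2 ∂μ := by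
      calc (∑ j, e j * b j) ^ 2 ≤ (∑ j, e j ^ 2) * ∑ j, b j ^ 2 :=
            Finset.sum_mul_sq_le_sq_mul_sq _ _ _
        _ ≤ (∑ j, e j ^ 2) * ∫ t, g t ^ 2 ∂μ := by
            refine mul_le_mul_of_nonneg_left ?_ hNnn
            calc ∑ j, b j ^ 2 = ∑ j, b j * b j :=
                  Finset.sum_congr rfl fun j _ => (pow_two _)
              _ ≤ _ := hBessel
    have habs : |∑ j, e j * b j|
        ≤ Real.sqrt (∑ j, e j ^ 2) * Real.sqrt (∫ t, g t ^ 2 ∂μ) := by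
      rw [← Real.sqrt_sq_eq_abs, ← Real.sqrt_mul hNnn]
      exact Real.sqrt_le_sqrt hCS
    have hfinal2 : ∫ t, (g t - h t) ^ 2 ∂μ
        ≤ (Real.sqrt (∫ t, g t ^ 2 ∂μ) + Real.sqrt (∑ j, e j ^ 2)) ^ 2 := by
      rw [hIgh]
      have hee : ∑ j, e j * e j = ∑ j, e j ^ 2 :=
        Finset.sum_congr rfl fun j _ => (pow_two _).symm
      rw [hee]
      have h1 : ∫ t, g t ^ 2 ∂μ = Real.sqrt (∫ t, g t ^ 2 ∂μ) ^ 2 :=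
        (Real.sq_sqrt hIg2nonneg).symm
      have h2 : ∑ j, e j ^ 2 = Real.sqrt (∑ j, e j ^ 2) ^ 2 := (Real.sq_sqrt hNnn).symm
      have h3 : -(∑ j, e j * b j) ≤ Real.sqrt (∑ j, e j ^ 2) * Real.sqrt (∫ t, g t ^ 2 ∂μ) :=
        (neg_le_abs _).trans habs
      nlinarith [h3]
    have hsq1 : Real.sqrt (∫ t, g t ^ 2 ∂μ) ≤ Real.sqrt m * s := by
      rw [← Real.sqrt_sq hs0, ← Real.sqrt_mul hm0.le]
      exact Real.sqrt_le_sqrt hIg2le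
    have hsq2 : Real.sqrt (∑ j, e j ^ 2) ≤ Real.sqrt (B / A) * (Real.sqrt m * s) := by
      have hBA : (0:ℝ) ≤ B / A := div_nonneg hBpos.le hApos.le
      have heq : Real.sqrt ((B / A) * m * s ^ 2)
          = Real.sqrt (B / A) * (Real.sqrt m * s) := by
        rw [Real.sqrt_mul (by positivity), Real.sqrt_mul hBA, Real.sqrt_sq hs0]
        ring
      rw [← heq]
      exact Real.sqrt_le_sqrt hNle
    calc Real.sqrt (∫ t, (f t - leastSquaresProj x w φ G f t) ^ 2 ∂μ)
        = Real.sqrt (∫ t, (g t - h t) ^ 2 ∂μ) := by rw [hint_eq]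
      _ ≤ Real.sqrt ((Real.sqrt (∫ t, g t ^ 2 ∂μ) + Real.sqrt (∑ j, e j ^ 2)) ^ 2) :=
          Real.sqrt_le_sqrt hfinal2
      _ = Real.sqrt (∫ t, g t ^ 2 ∂μ) + Real.sqrt (∑ j, e j ^ 2) :=
          Real.sqrt_sq (by positivity)
      _ ≤ Real.sqrt m * s + Real.sqrt (B / A) * (Real.sqrt m * s) := add_le_add hsq1 hsq2
      _ = ((1 + Real.sqrt (B / A)) * Real.sqrt m) * s := by ring
  -- conclude
  set K := (1 + Real.sqrt (B / A)) * Real.sqrt m with hK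
  have hKpos : 0 < K := by
    refine mul_pos ?_ (Real.sqrt_pos.mpr hm0)
    have := Real.sqrt_nonneg (B / A); linarith
  have hbound1 : Real.sqrt (∫ t, (f t - leastSquaresProj x w φ G f t) ^ 2 ∂μ)
      ≤ K * bestUniformError φ f := by
    have hdivle : Real.sqrt (∫ t, (f t - leastSquaresProj x w φ G f t) ^ 2 ∂μ) / K
        ≤ bestUniformError φ f := by
      rw [bestUniformError]
      refine le_ciInf fun c => ?_
      rw [div_le_iff₀ hKpos, mul_comm]
      exact key c
    calc Real.sqrt (∫ t, (f t - leastSquaresProj x w φ G f t) ^ 2 ∂μ)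
        = Real.sqrt (∫ t, (f t - leastSquaresProj x w φ G f t) ^ 2 ∂μ) / K * K :=
          (div_mul_cancel₀ _ hKpos.ne').symm
      _ ≤ bestUniformError φ f * K := mul_le_mul_of_nonneg_right hdivle hKpos.le
      _ = K * bestUniformError φ f := mul_comm _ _
  have hE0 : 0 ≤ bestUniformError φ f := by
    rw [bestUniformError]
    refine le_ciInf fun c => ?_
    obtain ⟨Cf, hCf⟩ := hfb; obtain ⟨Cp, hCp⟩ := hspan_bdd c
    have hbb : BddAbove (Set.range fun t : Ω => |f t - ∑ j, c j * φ j t|) := by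
      refine ⟨Cf + Cp, ?_⟩
      rintro _ ⟨u, rfl⟩
      exact (abs_sub _ _).trans (add_le_add (hCf u) (hCp u))
    exact le_ciSup_of_le hbb t₀ (abs_nonneg _)
  refine ⟨hbound1, fun hη => ?_⟩
  set η := max |1 - A| |1 - B| with hηdef
  have hη0 : 0 ≤ η := (abs_nonneg _).trans (le_max_left _ _)
  have hA' : 1 - η ≤ A := by
    have h1 : |1 - A| ≤ η := le_max_left _ _
    have := (abs_le.mp h1).2
    linarith
  have hB' : B ≤ 1 + η := by
    have h1 : |1 - B| ≤ η := le_max_right _ _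
    have := (abs_le.mp h1).1
    linarith
  have hratio : B / A ≤ (1 + η) / (1 - η) :=
    div_le_div₀ (by linarith) hB' (by linarith) hA'
  have hsle : Real.sqrt (B / A) ≤ Real.sqrt ((1 + η) / (1 - η)) := Real.sqrt_le_sqrt hratio
  calc Real.sqrt (∫ t, (f t - leastSquaresProj x w φ G f t) ^ 2 ∂μ)
      ≤ K * bestUniformError φ f := hbound1
    _ ≤ (1 + Real.sqrt ((1 + η) / (1 - η))) * Real.sqrt m * bestUniformError φ f := by
        refine mul_le_mul_of_nonneg_right ?_ hE0
        rw [hK]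
        exact mul_le_mul_of_nonneg_right (by linarith) (Real.sqrt_nonneg m)
end

section
/- (Proposition 1, refined bound.) Assume λ_min(G) > 0 and that the cubature rule is exact on constants, i.e. Σ_{i=1}^M w_i = S(1) = μ(Ω). Then for every bounded measurable f : Ω → ℝ, ‖f − 𝒢f‖_{L²} ≤ (1 + 1/√(λ_min(G))) · √(μ(Ω)) · E(f). Moreover, if η := max{|1 − λ_min(G)|, |1 − λ_max(G)|} < 1, then ‖f − 𝒢f‖_{L²} ≤ (1 + 1/√(1−η)) · √(μ(Ω)) · E(f). -/
open MeasureTheory Matrix BigOperators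

section Helpers

variable {Ω : Type*} [MeasurableSpace Ω] {μ : Measure Ω}

private lemma integrable_of_bdd [IsFiniteMeasure μ] {h : Ω → ℝ} (hm : Measurable h)
    {C : ℝ} (hC : ∀ t, |h t| ≤ C) : Integrable h μ :=
  (integrable_const C).mono' hm.aestronglyMeasurable
    (Filter.Eventually.of_forall fun t => by simpa [Real.norm_eq_abs] using hC t)

private lemma integral_cauchy_schwarz [IsFiniteMeasure μ] {a b : Ω → ℝ}
    (ha : Measurable a) (hb : Measurable b) {Ca Cb : ℝ}
    (hCa : ∀ t, |a t| ≤ Ca) (hCb : ∀ t, |b t| ≤ Cb) :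
    ∫ t, a t * b t ∂μ
      ≤ Real.sqrt (∫ t, (a t) ^ 2 ∂μ) * Real.sqrt (∫ t, (b t) ^ 2 ∂μ) := by
  have hpq : Real.HolderConjugate 2 2 := Real.HolderConjugate.two_two
  have hma : MemLp (fun t => |a t|) (ENNReal.ofReal 2) μ :=
    MemLp.of_bound ha.abs.aestronglyMeasurable Ca
      (Filter.Eventually.of_forall fun t => by
        simpa [Real.norm_eq_abs, abs_abs] using hCa t)
  have hmb : MemLp (fun t => |b t|) (ENNReal.ofReal 2) μ :=
    MemLp.of_bound hb.abs.aestronglyMeasurable Cb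
      (Filter.Eventually.of_forall fun t => by
        simpa [Real.norm_eq_abs, abs_abs] using hCb t)
  have h2 := MeasureTheory.integral_mul_le_Lp_mul_Lq_of_nonneg hpq
      (Filter.Eventually.of_forall fun t => abs_nonneg (a t))
      (Filter.Eventually.of_forall fun t => abs_nonneg (b t)) hma hmb
  have hsq : ∀ u : ℝ, |u| ^ (2 : ℝ) = u ^ 2 := fun u => by
    rw [show (2 : ℝ) = ((2 : ℕ) : ℝ) by norm_num, Real.rpow_natCast, sq_abs]
  simp only [hsq] at h2
  have hint_ab : Integrable (fun t => a t * b t) μ := by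
    refine integrable_of_bdd (ha.mul hb) (C := Ca * Cb) fun t => ?_
    rw [abs_mul]
    exact mul_le_mul (hCa t) (hCb t) (abs_nonneg _) ((abs_nonneg _).trans (hCa t))
  have hint_abs : Integrable (fun t => |a t| * |b t|) μ := by
    refine integrable_of_bdd (ha.abs.mul hb.abs) (C := Ca * Cb) fun t => ?_
    rw [abs_mul, abs_abs, abs_abs]
    exact mul_le_mul (hCa t) (hCb t) (abs_nonneg _) ((abs_nonneg _).trans (hCa t))
  have h1 : ∫ t, a t * b t ∂μ ≤ ∫ t, |a t| * |b t| ∂μ := by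
    refine integral_mono hint_ab hint_abs fun t => ?_
    calc a t * b t ≤ |a t * b t| := le_abs_self _
    _ = |a t| * |b t| := abs_mul _ _
  refine h1.trans (h2.trans (le_of_eq ?_))
  rw [Real.sqrt_eq_rpow, Real.sqrt_eq_rpow]

private lemma sqrt_integral_sub_sq_le [IsFiniteMeasure μ] {a b : Ω → ℝ}
    (ha : Measurable a) (hb : Measurable b) {Ca Cb : ℝ}
    (hCa : ∀ t, |a t| ≤ Ca) (hCb : ∀ t, |b t| ≤ Cb) :
    Real.sqrt (∫ t, (a t - b t) ^ 2 ∂μ)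
      ≤ Real.sqrt (∫ t, (a t) ^ 2 ∂μ) + Real.sqrt (∫ t, (b t) ^ 2 ∂μ) := by
  set X := ∫ t, (a t) ^ 2 ∂μ with hX
  set Y := ∫ t, (b t) ^ 2 ∂μ with hY
  have hX0 : 0 ≤ X := integral_nonneg fun t => sq_nonneg _
  have hY0 : 0 ≤ Y := integral_nonneg fun t => sq_nonneg _
  have hint_a2 : Integrable (fun t => (a t) ^ 2) μ := by
    refine integrable_of_bdd (ha.pow_const 2) (C := Ca ^ 2) fun t => ?_
    rw [abs_pow]
    exact pow_le_pow_left₀ (abs_nonneg _) (hCa t) 2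
  have hint_b2 : Integrable (fun t => (b t) ^ 2) μ := by
    refine integrable_of_bdd (hb.pow_const 2) (C := Cb ^ 2) fun t => ?_
    rw [abs_pow]
    exact pow_le_pow_left₀ (abs_nonneg _) (hCb t) 2
  have hint_ab : Integrable (fun t => a t * b t) μ := by
    refine integrable_of_bdd (ha.mul hb) (C := Ca * Cb) fun t => ?_
    rw [abs_mul]
    exact mul_le_mul (hCa t) (hCb t) (abs_nonneg _) ((abs_nonneg _).trans (hCa t))
  have h2ab : Integrable (fun t => 2 * (a t * b t)) μ := hint_ab.const_mul 2
  have hexp : ∫ t, (a t - b t) ^ 2 ∂μ = X - 2 * ∫ t, a t * b t ∂μ + Y := by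
    calc ∫ t, (a t - b t) ^ 2 ∂μ
        = ∫ t, ((a t) ^ 2 - 2 * (a t * b t)) + (b t) ^ 2 ∂μ := by
          congr 1; funext t; ring
      _ = (∫ t, (a t) ^ 2 - 2 * (a t * b t) ∂μ) + Y :=
          integral_add (hint_a2.sub h2ab) hint_b2
      _ = (X - ∫ t, 2 * (a t * b t) ∂μ) + Y := by
          rw [integral_sub hint_a2 h2ab]
      _ = X - 2 * ∫ t, a t * b t ∂μ + Y := by rw [integral_const_mul]
  have hcross : -(∫ t, a t * b t ∂μ) ≤ Real.sqrt X * Real.sqrt Y := by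
    have hna : ∀ t, |(-a t : ℝ)| ≤ Ca := fun t => by rw [abs_neg]; exact hCa t
    have h := integral_cauchy_schwarz (Ω := Ω) (μ := μ) ha.neg hb hna hCb
    have h1 : ∫ t, (-a t) * b t ∂μ = -(∫ t, a t * b t ∂μ) := by
      rw [← integral_neg]; congr 1; funext t; ring
    have h2 : ∫ t, (-a t) ^ 2 ∂μ = X := by simp [hX]
    simp only [Pi.neg_apply] at h
    rwa [h1, h2] at h
  have hle : ∫ t, (a t - b t) ^ 2 ∂μ ≤ (Real.sqrt X + Real.sqrt Y) ^ 2 := by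
    have hsq : (Real.sqrt X + Real.sqrt Y) ^ 2
        = X + 2 * (Real.sqrt X * Real.sqrt Y) + Y := by
      rw [add_sq, Real.sq_sqrt hX0, Real.sq_sqrt hY0, mul_assoc]
    rw [hexp, hsq]; nlinarith [hcross]
  calc Real.sqrt (∫ t, (a t - b t) ^ 2 ∂μ)
      ≤ Real.sqrt ((Real.sqrt X + Real.sqrt Y) ^ 2) := Real.sqrt_le_sqrt hle
    _ = Real.sqrt X + Real.sqrt Y :=
        Real.sqrt_sq (add_nonneg (Real.sqrt_nonneg _) (Real.sqrt_nonneg _))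

private lemma hasEigenvalue_of_herm {d : ℕ} {G : Matrix (Fin d) (Fin d) ℝ}
    (hherm : G.IsHermitian) (j : Fin d) :
    Module.End.HasEigenvalue (Matrix.mulVecLin G) (hherm.eigenvalues j) := by
  apply Module.End.hasEigenvalue_of_hasEigenvector
    (x := ⇑(hherm.eigenvectorBasis j))
  constructor
  · rw [Module.End.mem_eigenspace_iff]
    simpa [Matrix.mulVecLin_apply] using hherm.mulVec_eigenvectorBasis j
  · intro h0
    have hne := hherm.eigenvectorBasis.toBasis.ne_zero j
    apply hne
    rw [OrthonormalBasis.coe_toBasis]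
    simpa using h0

private lemma quad_lower_bound {d : ℕ} {G : Matrix (Fin d) (Fin d) ℝ}
    (hherm : G.IsHermitian) {A : ℝ} (hAle : ∀ j, A ≤ hherm.eigenvalues j)
    (v : Fin d → ℝ) :
    A * (v ⬝ᵥ v) ≤ v ⬝ᵥ (G *ᵥ v) := by
  classical
  set U : Matrix (Fin d) (Fin d) ℝ :=
    (hherm.eigenvectorUnitary : Matrix (Fin d) (Fin d) ℝ) with hUdef
  set u : Fin d → ℝ := star U *ᵥ v with hu
  have hUU : U * star U = 1 := (Matrix.mem_unitaryGroup_iff).mp hherm.eigenvectorUnitary.2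
  have hvU : v ᵥ* U = u := by
    funext j
    simp [hu, Matrix.vecMul, Matrix.mulVec, dotProduct, Matrix.star_apply, mul_comm]
  have hform : v ⬝ᵥ (G *ᵥ v) = ∑ j, hherm.eigenvalues j * (u j) ^ 2 := by
    conv_lhs => rw [hherm.spectral_theorem, Unitary.conjStarAlgAut_apply]
    rw [← Matrix.mulVec_mulVec, ← Matrix.mulVec_mulVec, Matrix.dotProduct_mulVec, hvU]
    simp only [dotProduct, Matrix.mulVec_diagonal]
    exact Finset.sum_congr rfl fun j _ => by
      simp [Function.comp]; ring
  have hvu : v ⬝ᵥ v = ∑ j, (u j) ^ 2 := by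
    have hUv : U *ᵥ u = v := by
      rw [hu, Matrix.mulVec_mulVec, hUU, Matrix.one_mulVec]
    calc v ⬝ᵥ v = v ⬝ᵥ (U *ᵥ u) := by rw [hUv]
      _ = (v ᵥ* U) ⬝ᵥ u := Matrix.dotProduct_mulVec _ _ _
      _ = u ⬝ᵥ u := by rw [hvU]
      _ = ∑ j, (u j) ^ 2 := by simp [dotProduct, sq]
  rw [hform, hvu, Finset.mul_sum]
  exact Finset.sum_le_sum fun j _ => mul_le_mul_of_nonneg_right (hAle j) (sq_nonneg _)

end Helpers

/-- **Proposition 1, refined bound.** If `λ_min(G) > 0` and the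
cubature rule is exact on constants, i.e. `∑ᵢ wᵢ = S(1) = μ(Ω)`, then for every
bounded measurable `f`,
`‖f − 𝒢f‖_{L²} ≤ (1 + 1/√(λ_min(G))) √(μ(Ω)) E(f)`; moreover if
`η = max{|1−λ_min|, |1−λ_max|} < 1` then
`‖f − 𝒢f‖_{L²} ≤ (1 + 1/√(1−η)) √(μ(Ω)) E(f)`. -/
theorem leastSquares_error_bound_refined
    {Ω : Type*} [MeasurableSpace Ω] (μ : Measure Ω)
    (hμ0 : 0 < μ Set.univ) (hμfin : μ Set.univ < ⊤)
    {M d : ℕ}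
    (x : Fin M → Ω) (w : Fin M → ℝ) (hw : ∀ i, 0 < w i)
    (φ : Fin d → Ω → ℝ)
    (hmeas : ∀ j, Measurable (φ j))
    (hbdd : ∀ j, ∃ C : ℝ, ∀ t, |φ j t| ≤ C)
    (horth : ∀ j k, ∫ t, φ j t * φ k t ∂μ = if j = k then (1 : ℝ) else 0)
    (G : Matrix (Fin d) (Fin d) ℝ)
    (hG : ∀ j k, G j k = ∑ i, w i * (φ j (x i) * φ k (x i)))
    (A B : ℝ)
    (hA : IsLeast {t : ℝ | Module.End.HasEigenvalue (Matrix.mulVecLin G) t} A)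
    (hB : IsGreatest {t : ℝ | Module.End.HasEigenvalue (Matrix.mulVecLin G) t} B)
    (hApos : 0 < A)
    (hexact : ∑ i, w i = (μ Set.univ).toReal)
    (f : Ω → ℝ) (hf : Measurable f) (hfb : ∃ C : ℝ, ∀ t, |f t| ≤ C) :
    Real.sqrt (∫ t, (f t - leastSquaresProj x w φ G f t) ^ 2 ∂μ)
        ≤ (1 + 1 / Real.sqrt A) * Real.sqrt (μ Set.univ).toReal
            * bestUniformError φ f
      ∧ (max |1 - A| |1 - B| < 1 →
          Real.sqrt (∫ t, (f t - leastSquaresProj x w φ G f t) ^ 2 ∂μ)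
            ≤ (1 + 1 / Real.sqrt (1 - max |1 - A| |1 - B|))
                * Real.sqrt (μ Set.univ).toReal * bestUniformError φ f) := by
  classical
  haveI : IsFiniteMeasure μ := ⟨hμfin⟩
  haveI : Nonempty Ω := by
    by_contra h
    rw [not_nonempty_iff] at h
    rw [Set.univ_eq_empty_iff.mpr h, measure_empty] at hμ0
    exact lt_irrefl 0 hμ0
  obtain ⟨Cf, hCf⟩ := hfb
  choose Cφ hCφ using hbdd
  set μR : ℝ := (μ Set.univ).toReal with hμR
  have hμR0 : 0 ≤ μR := ENNReal.toReal_nonneg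
  -- symmetry of G
  have hGsymm : G.IsHermitian := by
    rw [Matrix.IsHermitian]
    ext j k
    rw [Matrix.conjTranspose_apply, star_trivial, hG, hG]
    exact Finset.sum_congr rfl fun i _ => by ring
  have hAle : ∀ j, A ≤ hGsymm.eigenvalues j := fun j =>
    hA.2 (hasEigenvalue_of_herm hGsymm j)
  -- invertibility of G
  have hdet : IsUnit G.det := by
    rw [isUnit_iff_ne_zero, hGsymm.det_eq_prod_eigenvalues]
    have : (0 : ℝ) < ∏ i, hGsymm.eigenvalues i :=
      Finset.prod_pos fun i _ => lt_of_lt_of_le hApos (hAle i)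
    simpa using this.ne'
  -- key per-candidate bound
  have key : ∀ (c0 : Fin d → ℝ) (ε : ℝ), 0 ≤ ε →
      (∀ t, |f t - ∑ j, c0 j * φ j t| ≤ ε) →
      Real.sqrt (∫ t, (f t - leastSquaresProj x w φ G f t) ^ 2 ∂μ)
        ≤ (1 + 1 / Real.sqrt A) * Real.sqrt μR * ε := by
    intro c0 ε hε hub
    set p : Ω → ℝ := fun t => ∑ j, c0 j * φ j t with hp
    set g : Ω → ℝ := fun t => f t - p t with hg
    have hgm : Measurable g := hf.sub (Finset.measurable_sum _ fun j _ =>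
      (hmeas j).const_mul (c0 j))
    have hgb : ∀ t, |g t| ≤ ε := hub
    set bg : Fin d → ℝ := fun j' => ∑ i, w i * (g (x i) * φ j' (x i)) with hbg
    set cg : Fin d → ℝ := G⁻¹.mulVec bg with hcg
    set Gg : Ω → ℝ := fun t => ∑ j, cg j * φ j t with hGg
    have hGgm : Measurable Gg := Finset.measurable_sum _ fun j _ =>
      (hmeas j).const_mul (cg j)
    have hGgb : ∀ t, |Gg t| ≤ ∑ j, |cg j| * Cφ j := by
      intro t
      calc |Gg t| ≤ ∑ j, |cg j * φ j t| := Finset.abs_sum_le_sum_abs _ _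
        _ ≤ ∑ j, |cg j| * Cφ j := Finset.sum_le_sum fun j _ => by
            rw [abs_mul]
            exact mul_le_mul_of_nonneg_left (hCφ j t) (abs_nonneg _)
    -- split: f - 𝒢f = g - 𝒢g pointwise
    have hsplit : ∀ t, f t - leastSquaresProj x w φ G f t = g t - Gg t := by
      intro t
      have hbf : (fun j' => ∑ i, w i * (f (x i) * φ j' (x i)))
          = fun j' => bg j' + (G *ᵥ c0) j' := by
        funext j'
        have hGc0 : (G *ᵥ c0) j'
            = ∑ i, ∑ k, (w i * (φ j' (x i) * φ k (x i))) * c0 k := by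
          calc (G *ᵥ c0) j' = ∑ k, (∑ i, w i * (φ j' (x i) * φ k (x i))) * c0 k := by
                simp only [Matrix.mulVec, dotProduct, hG]
            _ = ∑ k, ∑ i, (w i * (φ j' (x i) * φ k (x i))) * c0 k :=
                Finset.sum_congr rfl fun k _ => Finset.sum_mul _ _ _
            _ = ∑ i, ∑ k, (w i * (φ j' (x i) * φ k (x i))) * c0 k := Finset.sum_comm
        have hbgj : bg j' = ∑ i, w i * (g (x i) * φ j' (x i)) := rfl
        rw [hGc0, hbgj, ← Finset.sum_add_distrib]
        refine Finset.sum_congr rfl fun i _ => ?_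
        have hsum : ∑ k, (w i * (φ j' (x i) * φ k (x i))) * c0 k
            = w i * (p (x i) * φ j' (x i)) := by
          have hpx : p (x i) = ∑ k, c0 k * φ k (x i) := rfl
          rw [hpx, Finset.sum_mul, Finset.mul_sum]
          exact Finset.sum_congr rfl fun k _ => by ring
        rw [hsum]
        have hgx : g (x i) = f (x i) - p (x i) := rfl
        rw [hgx]; ring
      have hcf : G⁻¹.mulVec (fun j' => ∑ i, w i * (f (x i) * φ j' (x i)))
          = fun j => cg j + c0 j := by
        rw [hbf]
        have : (fun j' => bg j' + (G *ᵥ c0) j') = bg + G *ᵥ c0 := rfl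
        rw [this, Matrix.mulVec_add, Matrix.mulVec_mulVec,
          Matrix.nonsing_inv_mul G hdet, Matrix.one_mulVec]
        rfl
      show f t - ∑ j, (G⁻¹.mulVec fun j' => ∑ i, w i * (f (x i) * φ j' (x i))) j * φ j t
          = g t - Gg t
      rw [hcf]
      have : ∑ j, (cg j + c0 j) * φ j t = Gg t + p t := by
        rw [hGg, hp, ← Finset.sum_add_distrib]
        exact Finset.sum_congr rfl fun j _ => by ring
      rw [this]
      have : g t = f t - p t := rfl
      rw [this]; ring
    -- quadratic quantities
    have hGcg : G *ᵥ cg = bg := by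
      rw [hcg, Matrix.mulVec_mulVec, Matrix.mul_nonsing_inv G hdet, Matrix.one_mulVec]
    set Q : ℝ := cg ⬝ᵥ (G *ᵥ cg) with hQ
    set Sg2 : ℝ := ∑ i, w i * (g (x i)) ^ 2 with hSg2
    have hSg2nn : 0 ≤ Sg2 := Finset.sum_nonneg fun i _ =>
      mul_nonneg (hw i).le (sq_nonneg _)
    have hSg2le : Sg2 ≤ μR * ε ^ 2 := by
      rw [← hexact, Finset.sum_mul]
      refine Finset.sum_le_sum fun i _ => ?_
      refine mul_le_mul_of_nonneg_left ?_ (hw i).le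
      calc (g (x i)) ^ 2 = |g (x i)| ^ 2 := (sq_abs _).symm
        _ ≤ ε ^ 2 := pow_le_pow_left₀ (abs_nonneg _) (hgb (x i)) 2
    -- Q = ∑ᵢ wᵢ g(xᵢ) Gg(xᵢ)
    have hQcross : Q = ∑ i, w i * (g (x i) * Gg (x i)) := by
      rw [hQ, hGcg]
      simp only [dotProduct, hbg, hGg, Finset.mul_sum]
      rw [Finset.sum_comm]
      refine Finset.sum_congr rfl fun i _ => ?_
      refine Finset.sum_congr rfl fun j _ => by ring
    -- ∑ᵢ wᵢ Gg(xᵢ)² = Q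
    have hQform : ∑ i, w i * (Gg (x i)) ^ 2 = Q := by
      have rhs_eq : cg ⬝ᵥ (G *ᵥ cg)
          = ∑ j, ∑ k, ∑ i, cg j * cg k * (w i * (φ j (x i) * φ k (x i))) := by
        calc cg ⬝ᵥ (G *ᵥ cg)
            = ∑ j, cg j * ∑ k, (∑ i, w i * (φ j (x i) * φ k (x i))) * cg k := by
              simp only [dotProduct, Matrix.mulVec, hG]
          _ = ∑ j, ∑ k, ∑ i, cg j * cg k * (w i * (φ j (x i) * φ k (x i))) := by
              refine Finset.sum_congr rfl fun j _ => ?_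
              rw [Finset.mul_sum]
              refine Finset.sum_congr rfl fun k _ => ?_
              rw [Finset.sum_mul, Finset.mul_sum]
              exact Finset.sum_congr rfl fun i _ => by ring
      have lhs_eq : ∑ i, w i * (Gg (x i)) ^ 2
          = ∑ j, ∑ k, ∑ i, cg j * cg k * (w i * (φ j (x i) * φ k (x i))) := by
        calc ∑ i, w i * (Gg (x i)) ^ 2
            = ∑ i, ∑ j, ∑ k, cg j * cg k * (w i * (φ j (x i) * φ k (x i))) := by
              refine Finset.sum_congr rfl fun i _ => ?_
              have hGgx : Gg (x i) = ∑ j, cg j * φ j (x i) := rfl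
              rw [hGgx, sq, Finset.sum_mul_sum, Finset.mul_sum]
              refine Finset.sum_congr rfl fun j _ => ?_
              rw [Finset.mul_sum]
              exact Finset.sum_congr rfl fun k _ => by ring
          _ = ∑ j, ∑ i, ∑ k, cg j * cg k * (w i * (φ j (x i) * φ k (x i))) :=
              Finset.sum_comm
          _ = ∑ j, ∑ k, ∑ i, cg j * cg k * (w i * (φ j (x i) * φ k (x i))) :=
              Finset.sum_congr rfl fun j _ => Finset.sum_comm
      rw [hQ, lhs_eq, rhs_eq]
    -- discrete Cauchy-Schwarz : Q² ≤ Sg2 * Q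
    have hCS : Q ^ 2 ≤ Sg2 * Q := by
      have h := Finset.sum_mul_sq_le_sq_mul_sq Finset.univ
        (fun i => Real.sqrt (w i) * g (x i)) (fun i => Real.sqrt (w i) * Gg (x i))
      have e1 : ∑ i, (Real.sqrt (w i) * g (x i)) * (Real.sqrt (w i) * Gg (x i))
          = Q := by
        rw [hQcross]
        refine Finset.sum_congr rfl fun i _ => ?_
        rw [show (Real.sqrt (w i) * g (x i)) * (Real.sqrt (w i) * Gg (x i))
            = (Real.sqrt (w i) * Real.sqrt (w i)) * (g (x i) * Gg (x i)) by ring,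
          Real.mul_self_sqrt (hw i).le]
      have e2 : ∑ i, (Real.sqrt (w i) * g (x i)) ^ 2 = Sg2 := by
        rw [hSg2]
        refine Finset.sum_congr rfl fun i _ => ?_
        rw [mul_pow, Real.sq_sqrt (hw i).le]
      have e3 : ∑ i, (Real.sqrt (w i) * Gg (x i)) ^ 2 = Q := by
        rw [← hQform]
        refine Finset.sum_congr rfl fun i _ => ?_
        rw [mul_pow, Real.sq_sqrt (hw i).le]
      rwa [e1, e2, e3] at h
    have hQlow : A * (cg ⬝ᵥ cg) ≤ Q := quad_lower_bound hGsymm hAle cg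
    have hcgnn : 0 ≤ cg ⬝ᵥ cg :=
      Finset.sum_nonneg fun j _ => mul_self_nonneg _
    have hQnn : 0 ≤ Q := le_trans (mul_nonneg hApos.le hcgnn) hQlow
    have hQle : Q ≤ Sg2 := by
      rcases hQnn.eq_or_lt with h0 | hQpos
      · rw [← h0]; exact hSg2nn
      · refine le_of_mul_le_mul_right ?_ hQpos
        rw [← sq]; exact hCS
    have hcg2 : cg ⬝ᵥ cg ≤ (μR * ε ^ 2) / A := by
      rw [le_div_iff₀ hApos]
      nlinarith [hQlow, hQle, hSg2le]
    -- positivity of the bounds on φ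
    have hCφ0 : ∀ j, 0 ≤ Cφ j := fun j =>
      (abs_nonneg _).trans (hCφ j (Classical.arbitrary Ω))
    -- L² norm of Gg equals the coefficient norm
    have hφint : ∀ j k : Fin d,
        Integrable (fun t => (cg j * cg k) * (φ j t * φ k t)) μ := by
      intro j k
      refine integrable_of_bdd ((measurable_const).mul ((hmeas j).mul (hmeas k)))
        (C := |cg j * cg k| * (Cφ j * Cφ k)) fun t => ?_
      rw [abs_mul]
      refine mul_le_mul_of_nonneg_left ?_ (abs_nonneg _)
      rw [abs_mul]
      exact mul_le_mul (hCφ j t) (hCφ k t) (abs_nonneg _) (hCφ0 j)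
    have hL2Gg : ∫ t, (Gg t) ^ 2 ∂μ = cg ⬝ᵥ cg := by
      have hpt : (fun t => (Gg t) ^ 2)
          = fun t => ∑ j, ∑ k, (cg j * cg k) * (φ j t * φ k t) := by
        funext t
        rw [sq]
        rw [show Gg t = ∑ j, cg j * φ j t from rfl, Finset.sum_mul_sum]
        exact Finset.sum_congr rfl fun j _ => Finset.sum_congr rfl fun k _ => by ring
      rw [hpt, integral_finset_sum _ (fun j _ => integrable_finset_sum _ fun k _ => hφint j k)]
      have hrow : ∀ j : Fin d,
          ∫ t, ∑ k, (cg j * cg k) * (φ j t * φ k t) ∂μ = cg j * cg j := by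
        intro j
        rw [integral_finset_sum _ fun k _ => hφint j k]
        have hterm : ∀ k : Fin d,
            ∫ t, (cg j * cg k) * (φ j t * φ k t) ∂μ
              = if j = k then cg j * cg k else 0 := by
          intro k
          rw [MeasureTheory.integral_const_mul, horth]
          split <;> simp
        rw [Finset.sum_congr rfl fun k _ => hterm k]
        simp
      rw [Finset.sum_congr rfl fun j _ => hrow j]
      rfl
    have hintg2 : Integrable (fun t => (g t) ^ 2) μ := by
      refine integrable_of_bdd (hgm.pow_const 2) (C := ε ^ 2) fun t => ?_
      rw [abs_pow]
      exact pow_le_pow_left₀ (abs_nonneg _) (hgb t) 2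
    have hintg2le : ∫ t, (g t) ^ 2 ∂μ ≤ μR * ε ^ 2 := by
      calc ∫ t, (g t) ^ 2 ∂μ ≤ ∫ _t, ε ^ 2 ∂μ := by
            refine integral_mono hintg2 (integrable_const _) fun t => ?_
            rw [← sq_abs]
            exact pow_le_pow_left₀ (abs_nonneg _) (hgb t) 2
        _ = μR * ε ^ 2 := by rw [integral_const, smul_eq_mul]; rfl
    have hmink := sqrt_integral_sub_sq_le (μ := μ) hgm hGgm hgb hGgb
    have hq1 : Real.sqrt (∫ t, (g t) ^ 2 ∂μ) ≤ Real.sqrt μR * ε := by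
      calc Real.sqrt (∫ t, (g t) ^ 2 ∂μ) ≤ Real.sqrt (μR * ε ^ 2) :=
            Real.sqrt_le_sqrt hintg2le
        _ = Real.sqrt μR * ε := by rw [Real.sqrt_mul hμR0, Real.sqrt_sq hε]
    have hq2 : Real.sqrt (∫ t, (Gg t) ^ 2 ∂μ) ≤ Real.sqrt μR * ε / Real.sqrt A := by
      rw [hL2Gg]
      calc Real.sqrt (cg ⬝ᵥ cg) ≤ Real.sqrt ((μR * ε ^ 2) / A) :=
            Real.sqrt_le_sqrt hcg2
        _ = Real.sqrt μR * ε / Real.sqrt A := by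
            rw [Real.sqrt_div (by positivity), Real.sqrt_mul hμR0, Real.sqrt_sq hε]
    have hgoal : Real.sqrt (∫ t, (f t - leastSquaresProj x w φ G f t) ^ 2 ∂μ)
        = Real.sqrt (∫ t, (g t - Gg t) ^ 2 ∂μ) := by
      simp only [hsplit]
    rw [hgoal]
    calc Real.sqrt (∫ t, (g t - Gg t) ^ 2 ∂μ)
        ≤ Real.sqrt (∫ t, (g t) ^ 2 ∂μ) + Real.sqrt (∫ t, (Gg t) ^ 2 ∂μ) := hmink
      _ ≤ Real.sqrt μR * ε + Real.sqrt μR * ε / Real.sqrt A := add_le_add hq1 hq2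
      _ = (1 + 1 / Real.sqrt A) * Real.sqrt μR * ε := by ring
  -- assemble using the best uniform error
  set S : (Fin d → ℝ) → ℝ := fun c => ⨆ t : Ω, |f t - ∑ j, c j * φ j t| with hSdef
  have hCφ0 : ∀ j, 0 ≤ Cφ j := fun j =>
    (abs_nonneg _).trans (hCφ j (Classical.arbitrary Ω))
  have hbdS : ∀ (c : Fin d → ℝ) (t : Ω),
      |f t - ∑ j, c j * φ j t| ≤ Cf + ∑ j, |c j| * Cφ j := by
    intro c t
    calc |f t - ∑ j, c j * φ j t| = |f t + -(∑ j, c j * φ j t)| := by rw [sub_eq_add_neg]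
      _ ≤ |f t| + |-(∑ j, c j * φ j t)| := abs_add_le _ _
      _ = |f t| + |∑ j, c j * φ j t| := by rw [abs_neg]
      _ ≤ Cf + ∑ j, |c j| * Cφ j := by
          refine add_le_add (hCf t) ?_
          refine (Finset.abs_sum_le_sum_abs _ _).trans ?_
          refine Finset.sum_le_sum fun j _ => ?_
          rw [abs_mul]
          exact mul_le_mul_of_nonneg_left (hCφ j t) (abs_nonneg _)
  have hbddS : ∀ c : Fin d → ℝ,
      BddAbove (Set.range fun t : Ω => |f t - ∑ j, c j * φ j t|) := fun c =>
    ⟨Cf + ∑ j, |c j| * Cφ j, by rintro y ⟨t, rfl⟩; exact hbdS c t⟩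
  have hubS : ∀ (c : Fin d → ℝ) (t : Ω), |f t - ∑ j, c j * φ j t| ≤ S c :=
    fun c t => le_ciSup (hbddS c) t
  have hS0 : ∀ c, 0 ≤ S c := fun c =>
    (abs_nonneg _).trans (hubS c (Classical.arbitrary Ω))
  have hK0 : 0 ≤ (1 + 1 / Real.sqrt A) * Real.sqrt μR := by positivity
  have hEdef : bestUniformError φ f = ⨅ c : Fin d → ℝ, S c := rfl
  have part1 : Real.sqrt (∫ t, (f t - leastSquaresProj x w φ G f t) ^ 2 ∂μ)
      ≤ (1 + 1 / Real.sqrt A) * Real.sqrt μR * bestUniformError φ f := by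
    rw [hEdef, Real.mul_iInf_of_nonneg hK0]
    exact le_ciInf fun c => key c (S c) (hS0 c) (hubS c)
  have hE0 : 0 ≤ bestUniformError φ f := by
    rw [hEdef]
    exact Real.iInf_nonneg hS0
  refine ⟨part1, fun hη => ?_⟩
  have h1A : |1 - A| ≤ max |1 - A| |1 - B| := le_max_left _ _
  have hA1 : 1 - max |1 - A| |1 - B| ≤ A := by
    have := (abs_le.mp h1A).2
    linarith
  have hηpos : 0 < 1 - max |1 - A| |1 - B| := by linarith
  have hsqle : Real.sqrt (1 - max |1 - A| |1 - B|) ≤ Real.sqrt A :=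
    Real.sqrt_le_sqrt hA1
  have hsqpos : 0 < Real.sqrt (1 - max |1 - A| |1 - B|) := Real.sqrt_pos.mpr hηpos
  have hfrac : 1 / Real.sqrt A ≤ 1 / Real.sqrt (1 - max |1 - A| |1 - B|) :=
    one_div_le_one_div_of_le hsqpos hsqle
  calc Real.sqrt (∫ t, (f t - leastSquaresProj x w φ G f t) ^ 2 ∂μ)
      ≤ (1 + 1 / Real.sqrt A) * Real.sqrt μR * bestUniformError φ f := part1
    _ ≤ (1 + 1 / Real.sqrt (1 - max |1 - A| |1 - B|)) * Real.sqrt μR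
          * bestUniformError φ f := by
        refine mul_le_mul_of_nonneg_right ?_ hE0
        refine mul_le_mul_of_nonneg_right ?_ (Real.sqrt_nonneg _)
        linarith
end

section
/- Let μ = μ₁ ⊗ μ₂ with dμ₁ = w₁(x)dx on (a,b) and dμ₂ = w₂(y)dy on (c,d), and let S = S_k^{(1)} ⊗ S_k^{(2)} be the tensor product of the k-point Gaussian rules for w₁ and w₂. Then the bivariate polynomial p(x,y) = ψ_k(x)/√(μ₂((c,d))), where ψ_k is the degree-k orthonormal polynomial for w₁, has total degree k, satisfies ∬ p² dμ = 1, and |∬ p² dμ − S(p²)| = 1. Consequently, for every n ≥ k, sup{ |I(q²) − S(q²)| : q bivariate polynomial of total degree ≤ n, ‖q‖_{L²(μ)} = 1 } ≥ 1. -/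
open MeasureTheory BigOperators

/-- The (possibly unbounded) open interval with extended-real endpoints,
viewed as a set of real numbers. -/
def erealIoo (a b : EReal) : Set ℝ := {t : ℝ | a < (t : EReal) ∧ (t : EReal) < b}

section Aux

lemma eval_aeval0 (v : Fin 2 → ℝ) (p : Polynomial ℝ) :
    MvPolynomial.eval v (Polynomial.aeval (MvPolynomial.X (0 : Fin 2) : MvPolynomial (Fin 2) ℝ) p)
      = p.eval (v 0) := by
  induction p using Polynomial.induction_on with
  | C a => simp
  | add p q hp hq => simp [hp, hq]
  | monomial n a h => simp_all [pow_succ, mul_assoc]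

lemma eval_aeval1 (v : Fin 2 → ℝ) (p : Polynomial ℝ) :
    MvPolynomial.eval v (Polynomial.aeval (MvPolynomial.X (1 : Fin 2) : MvPolynomial (Fin 2) ℝ) p)
      = p.eval (v 1) := by
  induction p using Polynomial.induction_on with
  | C a => simp
  | add p q hp hq => simp [hp, hq]
  | monomial n a h => simp_all [pow_succ, mul_assoc]

lemma totalDegree_aeval_X0 (p : Polynomial ℝ) (hp : p ≠ 0) :
    (Polynomial.aeval (MvPolynomial.X (0 : Fin 2) : MvPolynomial (Fin 2) ℝ) p).totalDegree
      = p.natDegree := by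
  classical
  apply le_antisymm
  · rw [Polynomial.aeval_eq_sum_range]
    refine (MvPolynomial.totalDegree_finset_sum _ _).trans ?_
    apply Finset.sup_le
    intro i hi
    refine (MvPolynomial.totalDegree_smul_le _ _).trans ?_
    rw [MvPolynomial.totalDegree_X_pow]
    exact Nat.lt_succ_iff.mp (Finset.mem_range.mp hi)
  · have hcoeff : MvPolynomial.coeff (Finsupp.single (0 : Fin 2) p.natDegree)
        (Polynomial.aeval (MvPolynomial.X (0 : Fin 2) : MvPolynomial (Fin 2) ℝ) p)
        = p.coeff p.natDegree := by
      rw [Polynomial.aeval_eq_sum_range, MvPolynomial.coeff_sum]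
      rw [Finset.sum_eq_single p.natDegree]
      · rw [MvPolynomial.coeff_smul, MvPolynomial.coeff_X_pow, if_pos rfl, smul_eq_mul, mul_one]
      · intro i _ hne
        rw [MvPolynomial.coeff_smul, MvPolynomial.coeff_X_pow, if_neg, smul_zero]
        intro h
        have := congrArg (fun f : Fin 2 →₀ ℕ => f 0) h
        simp only [Finsupp.single_eq_same] at this
        exact hne this
      · intro h
        exact absurd (Finset.self_mem_range_succ p.natDegree) h
    have hne : p.coeff p.natDegree ≠ 0 := by
      intro h
      exact hp (Polynomial.leadingCoeff_eq_zero.mp h)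
    have hmem : Finsupp.single (0 : Fin 2) p.natDegree
        ∈ (Polynomial.aeval (MvPolynomial.X (0 : Fin 2) : MvPolynomial (Fin 2) ℝ) p).support :=
      MvPolynomial.mem_support_iff.mpr (by rw [hcoeff]; exact hne)
    have := MvPolynomial.le_totalDegree hmem
    simpa [Finsupp.sum_single_index] using this

lemma univ_span (ψ : ℕ → Polynomial ℝ) (hdeg : ∀ i, (ψ i).natDegree = i) (h0 : ψ 0 ≠ 0) :
    ∀ (m : ℕ) (p : Polynomial ℝ), p.natDegree ≤ m →
      ∃ c : ℕ → ℝ, p = ∑ i ∈ Finset.range (m+1), c i • ψ i := by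
  intro m
  induction m with
  | zero =>
    intro p hp
    obtain ⟨c₀, hc₀⟩ := Polynomial.natDegree_eq_zero.mp (hdeg 0)
    have hc₀ne : c₀ ≠ 0 := fun h => h0 (by rw [← hc₀, h, map_zero])
    refine ⟨fun _ => p.coeff 0 / c₀, ?_⟩
    have hp' : p = Polynomial.C (p.coeff 0) := Polynomial.eq_C_of_natDegree_le_zero hp
    rw [Finset.sum_range_one, ← hc₀, Polynomial.smul_C, smul_eq_mul,
      div_mul_cancel₀ _ hc₀ne, ← hp']
  | succ m ih =>
    intro p hp
    set γ := p.coeff (m+1) / (ψ (m+1)).leadingCoeff with hγ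
    have hψne : ψ (m+1) ≠ 0 := by
      intro h
      have := hdeg (m+1)
      rw [h] at this
      simp at this
    have hlead : (ψ (m+1)).leadingCoeff ≠ 0 := Polynomial.leadingCoeff_ne_zero.mpr hψne
    have hdeg' : (p - γ • ψ (m+1)).natDegree ≤ m := by
      rw [Polynomial.natDegree_le_iff_coeff_eq_zero]
      intro j hj
      rw [Polynomial.coeff_sub, Polynomial.coeff_smul]
      rcases eq_or_lt_of_le (Nat.succ_le_of_lt hj) with h | h
      · have : (ψ (m+1)).coeff (m+1) = (ψ (m+1)).leadingCoeff := by
          rw [Polynomial.leadingCoeff, hdeg]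
        rw [← h, this, smul_eq_mul, hγ, div_mul_cancel₀ _ hlead, sub_self]
      · have h1 : p.coeff j = 0 := Polynomial.coeff_eq_zero_of_natDegree_lt (lt_of_le_of_lt hp h)
        have h2 : (ψ (m+1)).coeff j = 0 :=
          Polynomial.coeff_eq_zero_of_natDegree_lt (by rw [hdeg]; exact h)
        rw [h1, h2, smul_zero, sub_zero]
    obtain ⟨c, hc⟩ := ih _ hdeg'
    refine ⟨fun i => if i = m+1 then γ else c i, ?_⟩
    rw [Finset.sum_range_succ]
    simp only [if_pos rfl]
    have heq : ∑ i ∈ Finset.range (m+1), (if i = m+1 then γ else c i) • ψ i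
        = ∑ i ∈ Finset.range (m+1), c i • ψ i := by
      apply Finset.sum_congr rfl
      intro i hi
      rw [if_neg (by have := Finset.mem_range.mp hi; omega)]
    rw [heq, ← hc]
    abel_nf
    simp

lemma span2 (ψ χ : ℕ → Polynomial ℝ) (hdegψ : ∀ i, (ψ i).natDegree = i)
    (hdegχ : ∀ i, (χ i).natDegree = i) (h0ψ : ψ 0 ≠ 0) (h0χ : χ 0 ≠ 0)
    (n : ℕ) (q : MvPolynomial (Fin 2) ℝ) (hq : q.totalDegree ≤ n) :
    ∃ c : ℕ → ℕ → ℝ, q = ∑ i ∈ Finset.range (n+1), ∑ j ∈ Finset.range (n+1),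
      c i j • (Polynomial.aeval (MvPolynomial.X (0 : Fin 2) : MvPolynomial (Fin 2) ℝ) (ψ i)
        * Polynomial.aeval (MvPolynomial.X (1 : Fin 2) : MvPolynomial (Fin 2) ℝ) (χ j)) := by
  set A := fun i => Polynomial.aeval (MvPolynomial.X (0 : Fin 2) : MvPolynomial (Fin 2) ℝ) (ψ i)
    with hA
  set B := fun j => Polynomial.aeval (MvPolynomial.X (1 : Fin 2) : MvPolynomial (Fin 2) ℝ) (χ j)
    with hB
  set E : MvPolynomial (Fin 2) ℝ → Prop := fun r =>
    ∃ c : ℕ → ℕ → ℝ, r = ∑ i ∈ Finset.range (n+1), ∑ j ∈ Finset.range (n+1),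
      c i j • (A i * B j) with hE
  have Eadd : ∀ r₁ r₂, E r₁ → E r₂ → E (r₁ + r₂) := by
    rintro r₁ r₂ ⟨c₁, hc₁⟩ ⟨c₂, hc₂⟩
    refine ⟨fun i j => c₁ i j + c₂ i j, ?_⟩
    rw [hc₁, hc₂, ← Finset.sum_add_distrib]
    refine Finset.sum_congr rfl fun i _ => ?_
    rw [← Finset.sum_add_distrib]
    refine Finset.sum_congr rfl fun j _ => ?_
    rw [add_smul]
  have Ezero : E 0 := ⟨fun _ _ => 0, by simp⟩
  have Emono : ∀ d ∈ q.support, E (MvPolynomial.monomial d (MvPolynomial.coeff d q)) := by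
    intro d hd
    have hsum : d 0 + d 1 ≤ n := by
      have h1 : (d.sum fun _ e => e) ≤ q.totalDegree := MvPolynomial.le_totalDegree hd
      have h2 : (d.sum fun _ e => e) = d 0 + d 1 := by
        rw [Finsupp.sum_fintype _ _ (fun _ => rfl), Fin.sum_univ_two]
      omega
    obtain ⟨α, hα⟩ := univ_span ψ hdegψ h0ψ n (Polynomial.X ^ (d 0))
      (by rw [Polynomial.natDegree_X_pow]; omega)
    obtain ⟨β, hβ⟩ := univ_span χ hdegχ h0χ n (Polynomial.X ^ (d 1))
      (by rw [Polynomial.natDegree_X_pow]; omega)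
    have h1 : (MvPolynomial.X (0 : Fin 2) : MvPolynomial (Fin 2) ℝ) ^ (d 0)
        = ∑ i ∈ Finset.range (n+1), α i • A i := by
      have := congrArg
        (Polynomial.aeval (MvPolynomial.X (0 : Fin 2) : MvPolynomial (Fin 2) ℝ)) hα
      simpa [map_pow, map_sum] using this
    have h2 : (MvPolynomial.X (1 : Fin 2) : MvPolynomial (Fin 2) ℝ) ^ (d 1)
        = ∑ j ∈ Finset.range (n+1), β j • B j := by
      have := congrArg
        (Polynomial.aeval (MvPolynomial.X (1 : Fin 2) : MvPolynomial (Fin 2) ℝ)) hβ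
      simpa [map_pow, map_sum] using this
    have hmon : (MvPolynomial.monomial d (MvPolynomial.coeff d q) : MvPolynomial (Fin 2) ℝ)
        = MvPolynomial.C (MvPolynomial.coeff d q)
          * ((MvPolynomial.X (0 : Fin 2) : MvPolynomial (Fin 2) ℝ) ^ (d 0)
            * (MvPolynomial.X (1 : Fin 2) : MvPolynomial (Fin 2) ℝ) ^ (d 1)) := by
      rw [MvPolynomial.monomial_eq]
      congr 1
      rw [Finsupp.prod_fintype _ _ (fun _ => pow_zero _), Fin.prod_univ_two]
    refine ⟨fun i j => MvPolynomial.coeff d q * α i * β j, ?_⟩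
    rw [hmon, h1, h2, Finset.sum_mul_sum]
    rw [Finset.mul_sum]
    refine Finset.sum_congr rfl fun i _ => ?_
    rw [Finset.mul_sum]
    refine Finset.sum_congr rfl fun j _ => ?_
    rw [smul_mul_smul_comm, ← MvPolynomial.smul_eq_C_mul, smul_smul, ← mul_assoc]
  have := Finset.sum_induction _ E Eadd Ezero Emono
  rw [MvPolynomial.support_sum_monomial_coeff q] at this
  exact this

lemma eval_rep (ψ χ : ℕ → Polynomial ℝ) (n : ℕ) (c : ℕ → ℕ → ℝ)
    (q : MvPolynomial (Fin 2) ℝ)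
    (hq : q = ∑ i ∈ Finset.range (n+1), ∑ j ∈ Finset.range (n+1),
      c i j • (Polynomial.aeval (MvPolynomial.X (0 : Fin 2) : MvPolynomial (Fin 2) ℝ) (ψ i)
        * Polynomial.aeval (MvPolynomial.X (1 : Fin 2) : MvPolynomial (Fin 2) ℝ) (χ j)))
    (s t : ℝ) :
    MvPolynomial.eval ![s, t] q
      = ∑ j ∈ Finset.range (n+1),
          (∑ i ∈ Finset.range (n+1), c i j • ψ i : Polynomial ℝ).eval s * (χ j).eval t := by
  subst hq
  simp only [map_sum]
  rw [Finset.sum_comm]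
  refine Finset.sum_congr rfl fun j _ => ?_
  rw [Polynomial.eval_finset_sum, Finset.sum_mul]
  refine Finset.sum_congr rfl fun i _ => ?_
  rw [MvPolynomial.smul_eq_C_mul, map_mul, MvPolynomial.eval_C, map_mul,
    eval_aeval0, eval_aeval1, Polynomial.eval_smul]
  simp only [Matrix.cons_val_zero, Matrix.cons_val_one, Matrix.head_cons]
  rw [smul_eq_mul]; ring

lemma eval_rep_flat (ψ χ : ℕ → Polynomial ℝ) (n : ℕ) (c : ℕ → ℕ → ℝ)
    (q : MvPolynomial (Fin 2) ℝ)
    (hq : q = ∑ i ∈ Finset.range (n+1), ∑ j ∈ Finset.range (n+1),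
      c i j • (Polynomial.aeval (MvPolynomial.X (0 : Fin 2) : MvPolynomial (Fin 2) ℝ) (ψ i)
        * Polynomial.aeval (MvPolynomial.X (1 : Fin 2) : MvPolynomial (Fin 2) ℝ) (χ j)))
    (s t : ℝ) :
    MvPolynomial.eval ![s, t] q
      = ∑ p ∈ Finset.range (n+1) ×ˢ Finset.range (n+1),
          c p.1 p.2 * ((ψ p.1).eval s * (χ p.2).eval t) := by
  subst hq
  simp only [map_sum]
  rw [Finset.sum_product]
  refine Finset.sum_congr rfl fun i _ => ?_
  refine Finset.sum_congr rfl fun j _ => ?_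
  rw [MvPolynomial.smul_eval, map_mul, eval_aeval0, eval_aeval1]
  simp only [Matrix.cons_val_zero, Matrix.cons_val_one, Matrix.head_cons]

lemma parseval (s₁ s₂ : Set ℝ) (W₁ W₂ : ℝ → ℝ)
    (hint₁ : ∀ p : Polynomial ℝ, IntegrableOn (fun t => p.eval t * W₁ t) s₁)
    (hint₂ : ∀ p : Polynomial ℝ, IntegrableOn (fun t => p.eval t * W₂ t) s₂)
    (ψ χ : ℕ → Polynomial ℝ)
    (horthψ : ∀ i j, (∫ t in s₁, (ψ i).eval t * (ψ j).eval t * W₁ t)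
      = if i = j then (1 : ℝ) else 0)
    (horthχ : ∀ i j, (∫ t in s₂, (χ i).eval t * (χ j).eval t * W₂ t)
      = if i = j then (1 : ℝ) else 0)
    (n : ℕ) (c : ℕ → ℕ → ℝ) (q : MvPolynomial (Fin 2) ℝ)
    (hq : q = ∑ i ∈ Finset.range (n+1), ∑ j ∈ Finset.range (n+1),
      c i j • (Polynomial.aeval (MvPolynomial.X (0 : Fin 2) : MvPolynomial (Fin 2) ℝ) (ψ i)
        * Polynomial.aeval (MvPolynomial.X (1 : Fin 2) : MvPolynomial (Fin 2) ℝ) (χ j))) :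
    (∫ s in s₁, ∫ t in s₂, (MvPolynomial.eval ![s, t] q) ^ 2 * (W₁ s * W₂ t))
      = ∑ i ∈ Finset.range (n+1), ∑ j ∈ Finset.range (n+1), (c i j)^2 := by
  classical
  set R := Finset.range (n+1) with hR
  set Pg : ℕ → Polynomial ℝ := fun j => ∑ i ∈ R, c i j • ψ i with hPg
  have inner : ∀ s : ℝ, (∫ t in s₂, (MvPolynomial.eval ![s, t] q) ^ 2 * (W₁ s * W₂ t))
      = ∑ j ∈ R, ((Pg j).eval s)^2 * W₁ s := by
    intro s
    have hfun : (fun t => (MvPolynomial.eval ![s, t] q) ^ 2 * (W₁ s * W₂ t))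
        = fun t => ∑ p ∈ R ×ˢ R, ((Pg p.1).eval s * (Pg p.2).eval s * W₁ s)
            * ((χ p.1).eval t * (χ p.2).eval t * W₂ t) := by
      funext t
      rw [eval_rep ψ χ n c q hq s t, sq, Finset.sum_mul_sum, Finset.sum_product, Finset.sum_mul]
      refine Finset.sum_congr rfl fun j _ => ?_
      rw [Finset.sum_mul]
      exact Finset.sum_congr rfl fun j' _ => by ring
    rw [hfun, integral_finset_sum _ (fun p _ => by
      have h := (hint₂ (χ p.1 * χ p.2)).const_mul ((Pg p.1).eval s * (Pg p.2).eval s * W₁ s)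
      simpa [Polynomial.eval_mul, mul_assoc] using h)]
    have : ∀ p ∈ R ×ˢ R, (∫ t in s₂, ((Pg p.1).eval s * (Pg p.2).eval s * W₁ s)
            * ((χ p.1).eval t * (χ p.2).eval t * W₂ t))
        = ((Pg p.1).eval s * (Pg p.2).eval s * W₁ s) * (if p.1 = p.2 then 1 else 0) := by
      intro p _
      rw [MeasureTheory.integral_const_mul, horthχ p.1 p.2]
    rw [Finset.sum_congr rfl this, Finset.sum_product]
    refine Finset.sum_congr rfl fun j hj => ?_
    have hcoll : ∀ y ∈ R, (Polynomial.eval s (Pg (j, y).1) * Polynomial.eval s (Pg (j, y).2) * W₁ s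
          * if (j, y).1 = (j, y).2 then (1:ℝ) else 0)
        = if j = y then Polynomial.eval s (Pg j) ^ 2 * W₁ s else 0 := by
      intro y _
      by_cases h : j = y
      · subst h; simp [sq]
      · simp [h]
    rw [Finset.sum_congr rfl hcoll, Finset.sum_ite_eq, if_pos hj]
  have houter : (fun s => ∫ t in s₂, (MvPolynomial.eval ![s, t] q) ^ 2 * (W₁ s * W₂ t))
      = fun s => ∑ p ∈ R ×ˢ (R ×ˢ R), (c p.2.1 p.1 * c p.2.2 p.1)
          * ((ψ p.2.1).eval s * (ψ p.2.2).eval s * W₁ s) := by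
    funext s
    rw [inner s, Finset.sum_product]
    refine Finset.sum_congr rfl fun j _ => ?_
    rw [Finset.sum_product]
    have : (Pg j).eval s = ∑ i ∈ R, c i j * (ψ i).eval s := by
      rw [hPg, Polynomial.eval_finset_sum]
      exact Finset.sum_congr rfl fun i _ => by rw [Polynomial.eval_smul, smul_eq_mul]
    rw [this, sq, Finset.sum_mul_sum, Finset.sum_mul]
    refine Finset.sum_congr rfl fun i _ => ?_
    rw [Finset.sum_mul]
    refine Finset.sum_congr rfl fun i' _ => ?_
    ring
  rw [houter, integral_finset_sum _ (fun p _ => by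
      have h := (hint₁ (ψ p.2.1 * ψ p.2.2)).const_mul (c p.2.1 p.1 * c p.2.2 p.1)
      simpa [Polynomial.eval_mul, mul_assoc] using h)]
  have : ∀ p ∈ R ×ˢ (R ×ˢ R), (∫ s in s₁, (c p.2.1 p.1 * c p.2.2 p.1)
          * ((ψ p.2.1).eval s * (ψ p.2.2).eval s * W₁ s))
      = (c p.2.1 p.1 * c p.2.2 p.1) * (if p.2.1 = p.2.2 then 1 else 0) := by
    intro p _
    rw [MeasureTheory.integral_const_mul, horthψ p.2.1 p.2.2]
  rw [Finset.sum_congr rfl this, Finset.sum_product]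
  have final1 : ∀ x ∈ R, (∑ y ∈ R ×ˢ R,
        (c (x, y).2.1 (x, y).1 * c (x, y).2.2 (x, y).1
          * if (x, y).2.1 = (x, y).2.2 then (1:ℝ) else 0))
      = ∑ i ∈ R, c i x ^ 2 := by
    intro x _
    rw [Finset.sum_product]
    refine Finset.sum_congr rfl fun i hi => ?_
    have hcoll : ∀ y ∈ R, (c (x, (i, y)).2.1 (x, (i, y)).1 * c (x, (i, y)).2.2 (x, (i, y)).1
          * if (x, (i, y)).2.1 = (x, (i, y)).2.2 then (1:ℝ) else 0)
        = if i = y then c i x ^ 2 else 0 := by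
      intro y _
      by_cases h : i = y
      · subst h; simp [sq]
      · simp [h]
    rw [Finset.sum_congr rfl hcoll, Finset.sum_ite_eq, if_pos hi]
  rw [Finset.sum_congr rfl final1, Finset.sum_comm]

end Aux

/-- For `μ = μ₁ ⊗ μ₂` with `dμ₁ = w₁(x)dx` on `(a₁,b₁)` and
`dμ₂ = w₂(y)dy` on `(a₂,b₂)`, and `S = S_k⁽¹⁾ ⊗ S_k⁽²⁾` the tensor product of the
`k`-point Gaussian rules, the bivariate polynomial `p(x,y) = ψ_k(x)/√(μ₂((a₂,b₂)))`
(with `ψ_k` the degree-`k` orthonormal polynomial for `w₁`) has total degree `k`,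
satisfies `∬ p² dμ = 1` and `|∬ p² dμ − S(p²)| = 1`.  Consequently, for every
`n ≥ k`, `sup{ |I(q²) − S(q²)| : q bivariate, totalDegree q ≤ n, ‖q‖_{L²(μ)} = 1 } ≥ 1`. -/
theorem tensor_gauss_MZ_constant_ge_one
    (a₁ b₁ a₂ b₂ : EReal) (hab₁ : a₁ < b₁) (hab₂ : a₂ < b₂)
    (W₁ W₂ : ℝ → ℝ)
    (hW₁pos : ∀ t ∈ erealIoo a₁ b₁, 0 < W₁ t)
    (hW₂pos : ∀ t ∈ erealIoo a₂ b₂, 0 < W₂ t)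
    (hint₁ : ∀ p : Polynomial ℝ,
      IntegrableOn (fun t => p.eval t * W₁ t) (erealIoo a₁ b₁))
    (hint₂ : ∀ p : Polynomial ℝ,
      IntegrableOn (fun t => p.eval t * W₂ t) (erealIoo a₂ b₂))
    (hint₁₂ : ∀ q : MvPolynomial (Fin 2) ℝ,
      IntegrableOn (fun z : ℝ × ℝ => MvPolynomial.eval ![z.1, z.2] q * (W₁ z.1 * W₂ z.2))
        ((erealIoo a₁ b₁) ×ˢ (erealIoo a₂ b₂)))
    (ψ χ : ℕ → Polynomial ℝ)
    (hdegψ : ∀ i, (ψ i).natDegree = i) (hdegχ : ∀ i, (χ i).natDegree = i)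
    (horthψ : ∀ i j, (∫ t in erealIoo a₁ b₁, (ψ i).eval t * (ψ j).eval t * W₁ t)
      = if i = j then (1 : ℝ) else 0)
    (horthχ : ∀ i j, (∫ t in erealIoo a₂ b₂, (χ i).eval t * (χ j).eval t * W₂ t)
      = if i = j then (1 : ℝ) else 0)
    {k : ℕ} (hk : 0 < k)
    (x₁ : Fin k → ℝ) (hx₁mem : ∀ i, x₁ i ∈ erealIoo a₁ b₁)
    (hroot₁ : ∀ i, (ψ k).eval (x₁ i) = 0)
    (w₁ : Fin k → ℝ) (hw₁ : ∀ i, 0 < w₁ i)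
    (hexact₁ : ∀ p : Polynomial ℝ, p.natDegree ≤ 2 * k - 1 →
      ∑ i, w₁ i * p.eval (x₁ i) = ∫ t in erealIoo a₁ b₁, p.eval t * W₁ t)
    (x₂ : Fin k → ℝ) (hx₂mem : ∀ i, x₂ i ∈ erealIoo a₂ b₂)
    (hroot₂ : ∀ i, (χ k).eval (x₂ i) = 0)
    (w₂ : Fin k → ℝ) (hw₂ : ∀ i, 0 < w₂ i)
    (hexact₂ : ∀ p : Polynomial ℝ, p.natDegree ≤ 2 * k - 1 →
      ∑ i, w₂ i * p.eval (x₂ i) = ∫ t in erealIoo a₂ b₂, p.eval t * W₂ t)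
    (P : MvPolynomial (Fin 2) ℝ)
    (hP : P = (Real.sqrt (∫ t in erealIoo a₂ b₂, W₂ t))⁻¹
      • Polynomial.aeval (MvPolynomial.X (0 : Fin 2) : MvPolynomial (Fin 2) ℝ) (ψ k)) :
    P.totalDegree = k
    ∧ (∫ s in erealIoo a₁ b₁, ∫ t in erealIoo a₂ b₂,
        (MvPolynomial.eval ![s, t] P) ^ 2 * (W₁ s * W₂ t)) = 1
    ∧ |(∫ s in erealIoo a₁ b₁, ∫ t in erealIoo a₂ b₂,
          (MvPolynomial.eval ![s, t] P) ^ 2 * (W₁ s * W₂ t))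
        - ∑ r, ∑ s, w₁ r * w₂ s * (MvPolynomial.eval ![x₁ r, x₂ s] P) ^ 2| = 1
    ∧ ∀ n : ℕ, k ≤ n →
        1 ≤ sSup {u : ℝ | ∃ q : MvPolynomial (Fin 2) ℝ, q.totalDegree ≤ n
          ∧ (∫ s in erealIoo a₁ b₁, ∫ t in erealIoo a₂ b₂,
              (MvPolynomial.eval ![s, t] q) ^ 2 * (W₁ s * W₂ t)) = 1
          ∧ u = |(∫ s in erealIoo a₁ b₁, ∫ t in erealIoo a₂ b₂,
              (MvPolynomial.eval ![s, t] q) ^ 2 * (W₁ s * W₂ t))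
            - ∑ r, ∑ s, w₁ r * w₂ s * (MvPolynomial.eval ![x₁ r, x₂ s] q) ^ 2|} := by
  classical
  have hψ0 : ψ 0 ≠ 0 := by
    intro h
    have := horthψ 0 0
    rw [h] at this
    simp at this
  have hχ0 : χ 0 ≠ 0 := by
    intro h
    have := horthχ 0 0
    rw [h] at this
    simp at this
  obtain ⟨c₀, hc₀⟩ := Polynomial.natDegree_eq_zero.mp (hdegχ 0)
  set m₂ : ℝ := ∫ t in erealIoo a₂ b₂, W₂ t with hm₂def
  have hm1 : c₀ * c₀ * m₂ = 1 := by
    have h := horthχ 0 0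
    rw [if_pos rfl, ← hc₀] at h
    simp only [Polynomial.eval_C] at h
    rw [MeasureTheory.integral_const_mul] at h
    exact h
  have hc₀ne : c₀ ≠ 0 := by
    intro h
    rw [h] at hm1
    simp at hm1
  have hm₂pos : 0 < m₂ := by
    rcases lt_trichotomy m₂ 0 with h | h | h
    · nlinarith [mul_self_nonneg c₀]
    · rw [h] at hm1; simp at hm1
    · exact h
  have hγne : (Real.sqrt m₂)⁻¹ ≠ 0 := inv_ne_zero (by positivity)
  have hγsq : ((Real.sqrt m₂)⁻¹)^2 = m₂⁻¹ := by
    rw [inv_pow, Real.sq_sqrt hm₂pos.le]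
  have hψkne : ψ k ≠ 0 := by
    intro h
    have := hdegψ k
    rw [h] at this
    simp at this
    omega
  -- Part 1
  have h1 : P.totalDegree = k := by
    have hsupp : P.totalDegree = (Polynomial.aeval
        (MvPolynomial.X (0 : Fin 2) : MvPolynomial (Fin 2) ℝ) (ψ k)).totalDegree := by
      rw [hP]
      unfold MvPolynomial.totalDegree
      rw [MvPolynomial.support_smul_eq hγne]
    rw [hsupp, totalDegree_aeval_X0 _ hψkne, hdegψ]
  -- representation of P
  set cP : ℕ → ℕ → ℝ := fun i j => if i = k ∧ j = 0 then (Real.sqrt m₂)⁻¹ / c₀ else 0 with hcP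
  have hB0 : Polynomial.aeval (MvPolynomial.X (1 : Fin 2) : MvPolynomial (Fin 2) ℝ) (χ 0)
      = MvPolynomial.C c₀ := by
    rw [← hc₀, Polynomial.aeval_C, MvPolynomial.algebraMap_eq]
  have hPrep : P = ∑ i ∈ Finset.range (k+1), ∑ j ∈ Finset.range (k+1),
      cP i j • (Polynomial.aeval (MvPolynomial.X (0 : Fin 2) : MvPolynomial (Fin 2) ℝ) (ψ i)
        * Polynomial.aeval (MvPolynomial.X (1 : Fin 2) : MvPolynomial (Fin 2) ℝ) (χ j)) := by
    have hcollapse : ∑ i ∈ Finset.range (k+1), ∑ j ∈ Finset.range (k+1),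
        cP i j • (Polynomial.aeval (MvPolynomial.X (0 : Fin 2) : MvPolynomial (Fin 2) ℝ) (ψ i)
          * Polynomial.aeval (MvPolynomial.X (1 : Fin 2) : MvPolynomial (Fin 2) ℝ) (χ j))
        = ((Real.sqrt m₂)⁻¹ / c₀) • (Polynomial.aeval
            (MvPolynomial.X (0 : Fin 2) : MvPolynomial (Fin 2) ℝ) (ψ k)
          * Polynomial.aeval (MvPolynomial.X (1 : Fin 2) : MvPolynomial (Fin 2) ℝ) (χ 0)) := by
      rw [Finset.sum_eq_single k]
      · rw [Finset.sum_eq_single 0]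
        · simp [hcP]
        · intro j _ hjne
          simp [hcP, hjne]
        · intro h
          exact absurd (Finset.mem_range.mpr (Nat.succ_pos k)) h
      · intro i _ hine
        apply Finset.sum_eq_zero
        intro j _
        simp [hcP, hine]
      · intro h
        exact absurd (Finset.self_mem_range_succ k) h
    rw [hcollapse, hB0, mul_comm, ← MvPolynomial.smul_eq_C_mul, smul_smul,
      div_mul_cancel₀ _ hc₀ne, ← hP]
  -- Part 2
  have hsumcP : ∑ i ∈ Finset.range (k+1), ∑ j ∈ Finset.range (k+1), (cP i j)^2 = 1 := by
    have hcollapse : ∑ i ∈ Finset.range (k+1), ∑ j ∈ Finset.range (k+1), (cP i j)^2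
        = ((Real.sqrt m₂)⁻¹ / c₀)^2 := by
      rw [Finset.sum_eq_single k]
      · rw [Finset.sum_eq_single 0]
        · simp [hcP]
        · intro j _ hjne
          simp [hcP, hjne]
        · intro h
          exact absurd (Finset.mem_range.mpr (Nat.succ_pos k)) h
      · intro i _ hine
        apply Finset.sum_eq_zero
        intro j _
        simp [hcP, hine]
      · intro h
        exact absurd (Finset.self_mem_range_succ k) h
    rw [hcollapse, div_pow, hγsq]
    have hc2 : m₂ = (c₀^2)⁻¹ := by
      refine eq_inv_of_mul_eq_one_left ?_
      linear_combination hm1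
    rw [hc2, inv_inv, div_self (pow_ne_zero 2 hc₀ne)]
  have h2 : (∫ s in erealIoo a₁ b₁, ∫ t in erealIoo a₂ b₂,
      (MvPolynomial.eval ![s, t] P) ^ 2 * (W₁ s * W₂ t)) = 1 := by
    rw [parseval (erealIoo a₁ b₁) (erealIoo a₂ b₂) W₁ W₂ hint₁ hint₂ ψ χ horthψ horthχ
      k cP P hPrep, hsumcP]
  -- Part 3
  have hSP : ∑ r, ∑ s, w₁ r * w₂ s * (MvPolynomial.eval ![x₁ r, x₂ s] P) ^ 2 = 0 := by
    apply Finset.sum_eq_zero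
    intro r _
    apply Finset.sum_eq_zero
    intro s _
    have hz : MvPolynomial.eval ![x₁ r, x₂ s] P = 0 := by
      rw [hP, MvPolynomial.smul_eval, eval_aeval0]
      simp [hroot₁ r]
    rw [hz]
    ring
  have h3 : |(∫ s in erealIoo a₁ b₁, ∫ t in erealIoo a₂ b₂,
        (MvPolynomial.eval ![s, t] P) ^ 2 * (W₁ s * W₂ t))
      - ∑ r, ∑ s, w₁ r * w₂ s * (MvPolynomial.eval ![x₁ r, x₂ s] P) ^ 2| = 1 := by
    rw [h2, hSP, sub_zero, abs_one]
  refine ⟨h1, h2, h3, ?_⟩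
  -- Part 4
  intro n hn
  set Cst : ℝ := ∑ r, ∑ s, w₁ r * w₂ s
      * (∑ p ∈ Finset.range (n+1) ×ˢ Finset.range (n+1),
          ((ψ p.1).eval (x₁ r) * (χ p.2).eval (x₂ s))^2) with hCst
  have hbdd : ∀ u ∈ {u : ℝ | ∃ q : MvPolynomial (Fin 2) ℝ, q.totalDegree ≤ n
      ∧ (∫ s in erealIoo a₁ b₁, ∫ t in erealIoo a₂ b₂,
          (MvPolynomial.eval ![s, t] q) ^ 2 * (W₁ s * W₂ t)) = 1
      ∧ u = |(∫ s in erealIoo a₁ b₁, ∫ t in erealIoo a₂ b₂,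
          (MvPolynomial.eval ![s, t] q) ^ 2 * (W₁ s * W₂ t))
        - ∑ r, ∑ s, w₁ r * w₂ s * (MvPolynomial.eval ![x₁ r, x₂ s] q) ^ 2|},
      u ≤ 1 + Cst := by
    rintro u ⟨q, hqdeg, hqint, hu⟩
    obtain ⟨c, hrep⟩ := span2 ψ χ hdegψ hdegχ hψ0 hχ0 n q hqdeg
    have hpars := parseval (erealIoo a₁ b₁) (erealIoo a₂ b₂) W₁ W₂ hint₁ hint₂ ψ χ
      horthψ horthχ n c q hrep
    rw [hqint] at hpars
    have hsumc : ∑ p ∈ Finset.range (n+1) ×ˢ Finset.range (n+1), (c p.1 p.2)^2 = 1 := by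
      rw [Finset.sum_product]
      exact hpars.symm
    set S : ℝ := ∑ r, ∑ s, w₁ r * w₂ s * (MvPolynomial.eval ![x₁ r, x₂ s] q) ^ 2 with hS
    have hScs : S ≤ Cst := by
      refine Finset.sum_le_sum fun r _ => Finset.sum_le_sum fun s _ => ?_
      refine mul_le_mul_of_nonneg_left ?_ (mul_nonneg (hw₁ r).le (hw₂ s).le)
      rw [eval_rep_flat ψ χ n c q hrep]
      calc (∑ p ∈ Finset.range (n+1) ×ˢ Finset.range (n+1),
              c p.1 p.2 * ((ψ p.1).eval (x₁ r) * (χ p.2).eval (x₂ s)))^2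
          ≤ (∑ p ∈ Finset.range (n+1) ×ˢ Finset.range (n+1), (c p.1 p.2)^2)
            * (∑ p ∈ Finset.range (n+1) ×ˢ Finset.range (n+1),
                ((ψ p.1).eval (x₁ r) * (χ p.2).eval (x₂ s))^2) :=
            Finset.sum_mul_sq_le_sq_mul_sq _ _ _
        _ = _ := by rw [hsumc, one_mul]
    have hSnonneg : 0 ≤ S := by
      refine Finset.sum_nonneg fun r _ => Finset.sum_nonneg fun s _ => ?_
      have := (hw₁ r).le
      have := (hw₂ s).le
      positivity
    rw [hu, hqint]
    calc |1 - S| ≤ |1| + |S| := abs_sub _ _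
      _ = 1 + S := by rw [abs_one, abs_of_nonneg hSnonneg]
      _ ≤ 1 + Cst := by linarith
  refine le_csSup ⟨1 + Cst, fun u hu => hbdd u hu⟩ ?_
  exact ⟨P, h1.le.trans hn, h2, h3.symm⟩
end
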